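/- arXiv:2504.15873 — 7 statements merged into one kernel-verified Lean document; each statement's English description precedes it below -/
import Mathlib

section
/- For a delay-free (n,k,δ) convolutional code C, the j-th column distance satisfies d_j^c ≤ (n-k)(j+1) + 1 for every j ∈ ℕ₀. -/
open Polynomial Matrix
open scoped Classical

/-- The weight of the `i`-th coefficient vector of `v(z) ∈ F[z]^n`:
the number of nonzero entries of `v_i ∈ F^n`. -/
noncomputable def coeffWt {F : Type*} [Field F] {n : ℕ} (v : Fin n → Polynomial F) (i : ℕ) : ℕ :=
  (Finset.univ.filter fun b => (v b).coeff i ≠ 0).card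

/-- The `j`-th column distance of a convolutional code `C ⊆ F[z]^n`:
`d_j^c = min { wt(v_{[0,j]}) : v ∈ C, v_0 ≠ 0 }`. -/
noncomputable def colDist {F : Type*} [Field F] {n : ℕ}
    (C : Submodule (Polynomial F) (Fin n → Polynomial F)) (j : ℕ) : ℕ :=
  sInf { d | ∃ v ∈ C, (∃ b, (v b).coeff 0 ≠ 0) ∧
    d = ∑ i ∈ Finset.range (j + 1), coeffWt v i }

/-- A sequence defined by strong recursion: value at `i+1` may depend on all
earlier values. -/
noncomputable def useq {V : Type*} (f0 : V) (step : (i : ℕ) → (Fin (i + 1) → V) → V) : ℕ → V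
  | 0 => f0
  | (i + 1) => step i fun l => useq f0 step l.1
  termination_by i => i
  decreasing_by exact l.2

/-- For a delay-free `(n,k,δ)` convolutional code, the `j`-th column distance
satisfies `d_j^c ≤ (n-k)(j+1) + 1`. -/
theorem colDist_le_singleton_bound {F : Type*} [Field F] [Fintype F] {k n : ℕ}
    (hk : 0 < k) (hkn : k < n)
    (G : Matrix (Fin k) (Fin n) (Polynomial F))
    (hG : (G.map (fun p => p.eval 0)).rank = k)
    (C : Submodule (Polynomial F) (Fin n → Polynomial F))
    (hC : C = LinearMap.range (Matrix.vecMulLinear G))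
    (j : ℕ) :
    colDist C j ≤ (n - k) * (j + 1) + 1 := by
  classical
  set G₀ : Matrix (Fin k) (Fin n) F := G.map (fun p => p.eval 0) with hG₀def
  -- the columns of G₀ span F^k
  have hspan : Submodule.span F (Set.range G₀ᵀ) = ⊤ := by
    apply Submodule.eq_top_of_finrank_eq
    change Module.finrank F (Submodule.span F (Set.range G₀.col)) = _
    rw [← Matrix.range_mulVecLin]
    rw [Module.finrank_fin_fun]
    exact hG
  -- extract a basis among the columns
  obtain ⟨s, hs_sub, hs_span, hs_ind⟩ := exists_linearIndependent F (Set.range G₀ᵀ)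
  rw [hspan] at hs_span
  have hsfin : s.Finite := hs_ind.setFinite
  haveI : Fintype s := hsfin.fintype
  have hscard : s.toFinset.card = k := by
    have h1 := finrank_span_set_eq_card hs_ind
    rw [hs_span, finrank_top, Module.finrank_fin_fun] at h1
    exact h1.symm
  -- choose column indices realizing the basis
  have hex : ∀ x : s.toFinset, ∃ i : Fin n, G₀ᵀ i = (x : Fin k → F) := by
    rintro ⟨x, hx⟩
    exact hs_sub (Set.mem_toFinset.mp hx)
  choose ι hι using hex
  have hιinj : Function.Injective ι := by
    intro x y hxy
    apply Subtype.ext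
    rw [← hι x, ← hι y, hxy]
  set J : Finset (Fin n) := s.toFinset.attach.image ι with hJdef
  have hJcard : J.card = k := by
    rw [hJdef, Finset.card_image_of_injective _ hιinj, Finset.card_attach, hscard]
  have hJmem : ∀ i ∈ J, G₀ᵀ i ∈ s := by
    intro i hi
    rw [hJdef, Finset.mem_image] at hi
    obtain ⟨x, _, rfl⟩ := hi
    rw [hι x]
    exact Set.mem_toFinset.mp x.2
  have hsJ : s ⊆ G₀ᵀ '' (J : Set (Fin n)) := by
    intro x hx
    refine ⟨ι ⟨x, Set.mem_toFinset.mpr hx⟩, ?_, hι _⟩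
    rw [hJdef]
    exact Finset.mem_image_of_mem _ (Finset.mem_attach _ _)
  have hspanJ : Submodule.span F (G₀ᵀ '' (J : Set (Fin n))) = ⊤ := by
    apply top_unique
    rw [← hs_span]
    exact Submodule.span_mono hsJ
  -- the map u ↦ (u ᵥ* G₀)|_J
  set φ : (Fin k → F) →ₗ[F] (↥J → F) :=
    { toFun := fun u i => ∑ a, u a * G₀ a i.1
      map_add' := by
        intro x y; funext i; simp [add_mul, Finset.sum_add_distrib]
      map_smul' := by
        intro c x; funext i; simp [Finset.mul_sum, mul_assoc] } with hφdef
  have hφapp : ∀ (u : Fin k → F) (i : ↥J),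
      φ u i = ∑ a, u a * G₀ a i.1 := fun _ _ => rfl
  have hφinj : Function.Injective φ := by
    rw [← LinearMap.ker_eq_bot, LinearMap.ker_eq_bot']
    intro u hu
    set ℓ : (Fin k → F) →ₗ[F] F :=
      { toFun := fun x => ∑ a, u a * x a
        map_add' := by intro x y; simp [mul_add, Finset.sum_add_distrib]
        map_smul' := by intro c x; simp [Finset.mul_sum, mul_left_comm] } with hℓdef
    have htop : ∀ x : Fin k → F, ℓ x = 0 := by
      intro x
      have hx : x ∈ Submodule.span F (G₀ᵀ '' (J : Set (Fin n))) := by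
        rw [hspanJ]; trivial
      induction hx using Submodule.span_induction with
      | mem y hy =>
        obtain ⟨i, hiJ, rfl⟩ := hy
        have h2 := congrFun hu ⟨i, hiJ⟩
        simpa [hℓdef, hφapp] using h2
      | zero => simp
      | add y z _ _ hy hz => rw [map_add, hy, hz, add_zero]
      | smul c y _ hy => rw [_root_.map_smul, hy, smul_zero]
    funext a
    have h3 := htop (Pi.single a 1)
    rw [hℓdef] at h3
    simpa [Pi.single_apply, mul_ite, Finset.sum_ite_eq'] using h3
  have hrank : Module.finrank F (Fin k → F)
      = Module.finrank F (↥J → F) := by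
    rw [Module.finrank_fin_fun, Module.finrank_pi, Fintype.card_coe, hJcard]
  have hφsurj : Function.Surjective φ :=
    (LinearMap.injective_iff_surjective_of_finrank_eq_finrank hrank).mp hφinj
  -- a distinguished column index
  obtain ⟨i0, hi0⟩ := Finset.card_pos.mp (by rw [hJcard]; exact hk)
  set i₀ : ↥J := ⟨i0, hi0⟩ with hi₀def
  -- construct the input sequence
  set f0 : Fin k → F := Classical.choose (hφsurj (Pi.single i₀ 1)) with hf0def
  set step : (i : ℕ) → (Fin (i + 1) → (Fin k → F)) → (Fin k → F) := fun i prev =>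
    Classical.choose (hφsurj (fun i' =>
      -(∑ l : Fin (i + 1), ∑ a, prev l a * (G a i'.1).coeff (i + 1 - l.1)))) with hstepdef
  set u : ℕ → Fin k → F := useq f0 step with hudef
  have hu0 : φ (u 0) = Pi.single i₀ 1 := by
    have : u 0 = f0 := by rw [hudef, useq]
    rw [this, hf0def]
    exact Classical.choose_spec (hφsurj (Pi.single i₀ 1))
  have husucc : ∀ i : ℕ, φ (u (i + 1)) = fun i' =>
      -(∑ l : Fin (i + 1), ∑ a, u l.1 a * (G a i'.1).coeff (i + 1 - l.1)) := by
    intro i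
    have h1 : u (i + 1) = step i (fun l => u l.1) := by rw [hudef, useq]
    rw [h1, hstepdef]
    exact Classical.choose_spec (hφsurj _)
  -- the codeword
  set v : Fin n → Polynomial F :=
    G.vecMulLinear (fun a => ∑ i ∈ Finset.range (j + 1), Polynomial.monomial i (u i a))
    with hvdef
  have hvC : v ∈ C := by rw [hC]; exact ⟨_, rfl⟩
  -- coefficient formula for v
  have hcoeff : ∀ m : ℕ, m ≤ j → ∀ b,
      (v b).coeff m = ∑ l ∈ Finset.range (m + 1), ∑ a, u l a * (G a b).coeff (m - l) := by
    intro m hm b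
    have hb : v b = ∑ a, (∑ i ∈ Finset.range (j + 1), Polynomial.monomial i (u i a)) * G a b := by
      rw [hvdef]
      simp [Matrix.vecMul, dotProduct]
    rw [hb, Polynomial.finset_sum_coeff]
    have hprod : ∀ a, ((∑ i ∈ Finset.range (j + 1), Polynomial.monomial i (u i a)) * G a b).coeff m
        = ∑ l ∈ Finset.range (m + 1), u l a * (G a b).coeff (m - l) := by
      intro a
      rw [Polynomial.coeff_mul, Finset.Nat.sum_antidiagonal_eq_sum_range_succ_mk]
      refine Finset.sum_congr rfl fun l hl => ?_
      have hlm : l ≤ j := le_trans (Nat.lt_succ_iff.mp (Finset.mem_range.mp hl)) hm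
      congr 1
      rw [Polynomial.finset_sum_coeff]
      simp only [Polynomial.coeff_monomial]
      rw [Finset.sum_ite_eq' (Finset.range (j + 1)) l (fun i => u i a)]
      simp [Finset.mem_range, Nat.lt_succ_iff, hlm]
    rw [Finset.sum_congr rfl fun a _ => hprod a]
    exact Finset.sum_comm
  -- values on J
  have hV0 : ∀ i' : ↥J,
      (∑ a, u 0 a * (G a i'.1).coeff 0) = Pi.single (M := fun _ => F) i₀ 1 i' := by
    intro i'
    have h2 := congrFun hu0 i'
    rw [hφapp] at h2
    rw [← h2]
    refine Finset.sum_congr rfl fun a _ => ?_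
    rw [hG₀def]
    simp [Matrix.map_apply, ← Polynomial.coeff_zero_eq_eval_zero]
  have hVm : ∀ m : ℕ, 1 ≤ m → ∀ i' : ↥J,
      (∑ l ∈ Finset.range (m + 1), ∑ a, u l a * (G a i'.1).coeff (m - l)) = 0 := by
    intro m hm i'
    obtain ⟨i, rfl⟩ : ∃ i, m = i + 1 := ⟨m - 1, by omega⟩
    rw [Finset.sum_range_succ]
    have hlast : (∑ a, u (i + 1) a * (G a i'.1).coeff (i + 1 - (i + 1))) = φ (u (i + 1)) i' := by
      rw [hφapp]
      refine Finset.sum_congr rfl fun a _ => ?_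
      rw [hG₀def]
      simp [Matrix.map_apply, ← Polynomial.coeff_zero_eq_eval_zero]
    rw [hlast, husucc i]
    rw [Finset.sum_range fun l => ∑ a, u l a * (G a i'.1).coeff (i + 1 - l)]
    simp
  -- nonzero zeroth coefficient
  have hvnz : (v i0).coeff 0 ≠ 0 := by
    rw [hcoeff 0 (Nat.zero_le j) i0, Finset.sum_range_one]
    have h2 := hV0 i₀
    rw [hi₀def] at h2
    simp only [Nat.sub_zero] at h2 ⊢
    rw [h2, Pi.single_eq_same]
    exact one_ne_zero
  -- weight bounds
  have hw0 : coeffWt v 0 ≤ (n - k) + 1 := by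
    unfold coeffWt
    have hsub : (Finset.univ.filter fun b => (v b).coeff 0 ≠ 0) ⊆ insert i0 Jᶜ := by
      intro b hb
      simp only [Finset.mem_filter] at hb
      by_contra hbn
      simp only [Finset.mem_insert, Finset.mem_compl, not_or, not_not] at hbn
      obtain ⟨hbne, hbJ⟩ := hbn
      apply hb.2
      rw [hcoeff 0 (Nat.zero_le j) b, Finset.sum_range_one]
      have h2 := hV0 ⟨b, hbJ⟩
      simp only [Nat.sub_zero] at h2 ⊢
      rw [h2, Pi.single_apply]
      rw [if_neg]
      intro h3
      exact hbne (congrArg Subtype.val h3)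
    calc (Finset.univ.filter fun b => (v b).coeff 0 ≠ 0).card
        ≤ (insert i0 Jᶜ).card := Finset.card_le_card hsub
      _ ≤ Jᶜ.card + 1 := Finset.card_insert_le _ _
      _ = (n - k) + 1 := by rw [Finset.card_compl, hJcard, Fintype.card_fin]
  have hwm : ∀ m : ℕ, 1 ≤ m → m ≤ j → coeffWt v m ≤ n - k := by
    intro m h1 h2
    unfold coeffWt
    have hsub : (Finset.univ.filter fun b => (v b).coeff m ≠ 0) ⊆ Jᶜ := by
      intro b hb
      simp only [Finset.mem_filter] at hb
      rw [Finset.mem_compl]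
      intro hbJ
      apply hb.2
      rw [hcoeff m h2 b]
      exact hVm m h1 ⟨b, hbJ⟩
    calc (Finset.univ.filter fun b => (v b).coeff m ≠ 0).card
        ≤ Jᶜ.card := Finset.card_le_card hsub
      _ = n - k := by rw [Finset.card_compl, hJcard, Fintype.card_fin]
  -- conclude
  have hmem : (∑ i ∈ Finset.range (j + 1), coeffWt v i) ∈
      { d | ∃ w ∈ C, (∃ b, (w b).coeff 0 ≠ 0) ∧
        d = ∑ i ∈ Finset.range (j + 1), coeffWt w i } :=
    ⟨v, hvC, ⟨i0, hvnz⟩, rfl⟩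
  refine le_trans (Nat.sInf_le hmem) ?_
  rw [Finset.sum_range_succ']
  have h1 : ∑ i ∈ Finset.range j, coeffWt v (i + 1) ≤ j * (n - k) := by
    calc ∑ i ∈ Finset.range j, coeffWt v (i + 1)
        ≤ ∑ _i ∈ Finset.range j, (n - k) :=
          Finset.sum_le_sum fun i hi =>
            hwm (i + 1) (Nat.succ_le_succ (Nat.zero_le i))
              (Nat.succ_le_of_lt (Finset.mem_range.mp hi))
      _ = j * (n - k) := by simp [Finset.sum_const, Finset.card_range, mul_comm]
  calc (∑ i ∈ Finset.range j, coeffWt v (i + 1)) + coeffWt v 0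
      ≤ j * (n - k) + ((n - k) + 1) := Nat.add_le_add h1 hw0
    _ = (n - k) * (j + 1) + 1 := by ring
end

section
/- For a delay-free (n,k,δ) convolutional code C, if d_j^c = (n-k)(j+1) + 1 for some j ∈ ℕ₀, then d_i^c = (n-k)(i+1) + 1 for all i ≤ j. -/
open Polynomial Matrix
open scoped Classical

lemma coeff_vecMul {F : Type*} [Field F] {k n : ℕ} (G : Matrix (Fin k) (Fin n) (Polynomial F))
    (u : Fin k → Polynomial F) (b : Fin n) (t : ℕ) :
    ((Matrix.vecMul u G) b).coeff t
      = ∑ s ∈ Finset.range (t + 1), ∑ a, (u a).coeff s * (G a b).coeff (t - s) := by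
  have : (Matrix.vecMul u G) b = ∑ a, u a * G a b := by
    simp [Matrix.vecMul, dotProduct]
  rw [this, Polynomial.finset_sum_coeff]
  rw [Finset.sum_comm]
  refine Finset.sum_congr rfl fun a _ => ?_
  rw [Polynomial.coeff_mul, Finset.Nat.sum_antidiagonal_eq_sum_range_succ_mk]

noncomputable def extW {F : Type*} [Field F] {k n : ℕ}
    (Gc : ℕ → Fin k → Fin n → F) (i : ℕ) (u : ℕ → Fin k → F)
    (s' : Fin k → Fin n) (Minv : Matrix (Fin k) (Fin k) F) : ℕ → Fin k → F
  | t =>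
    if t ≤ i then u t
    else Matrix.vecMul (fun c => -(∑ s ∈ (Finset.range t).attach,
        ∑ a, extW Gc i u s' Minv s.1 a * Gc (t - s.1) a (s' c))) Minv
  termination_by t => t
  decreasing_by exact Finset.mem_range.mp s.2

/-- Extension lemma: any message can be modified above degree `i` so that the
codeword coefficients in `(i, j]` each have weight at most `n - k`. -/
lemma extension {F : Type*} [Field F] {k n : ℕ}
    (G : Matrix (Fin k) (Fin n) (Polynomial F))
    (hG : (G.map (fun p => p.eval 0)).rank = k)
    (u : Fin k → Polynomial F) (i j : ℕ) (hij : i ≤ j) :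
    ∃ v' ∈ LinearMap.range (Matrix.vecMulLinear G),
      (∀ b, ∀ t ≤ i, (v' b).coeff t = ((Matrix.vecMul u G) b).coeff t) ∧
      ∀ t, i < t → t ≤ j → coeffWt v' t ≤ n - k := by
  set G0 : Matrix (Fin k) (Fin n) F := G.map (fun p => p.eval 0) with hG0def
  -- columns of G0 span F^k
  have hspan_top : Submodule.span F (Set.range G0ᵀ) = ⊤ := by
    apply Submodule.eq_top_of_finrank_eq
    have := hG
    rw [Matrix.rank, Matrix.range_mulVecLin] at this
    rw [Module.finrank_fin_fun]
    exact this
  obtain ⟨bset, hbsub, hbspan, hbli⟩ := exists_linearIndependent F (Set.range G0ᵀ)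
  rw [hspan_top] at hbspan
  obtain ⟨B, hBapp⟩ : ∃ B : Module.Basis bset F (Fin k → F), ∀ x : bset, B x = (x : Fin k → F) :=
    ⟨Module.Basis.mk hbli (by rw [Subtype.range_coe]; exact hbspan.ge),
      fun x => Module.Basis.mk_apply _ _ x⟩
  have e : bset ≃ Fin k := B.indexEquiv (Pi.basisFun F (Fin k))
  set B' : Module.Basis (Fin k) F (Fin k → F) := B.reindex e with hB'def
  have hB'val : ∀ c, (B' c : Fin k → F) = ((e.symm c : bset) : Fin k → F) := by
    intro c
    rw [hB'def, Module.Basis.reindex_apply, hBapp]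
  have hchoose : ∀ c : Fin k, ∃ m : Fin n, G0ᵀ m = B' c := by
    intro c
    obtain ⟨m, hm⟩ := hbsub (e.symm c).2
    exact ⟨m, by rw [hm, hB'val]⟩
  choose s' hs' using hchoose
  have hs'inj : Function.Injective s' := by
    intro c1 c2 h
    have : (B' c1 : Fin k → F) = B' c2 := by rw [← hs' c1, ← hs' c2, h]
    exact B'.injective (by exact_mod_cast this)
  -- the selected square submatrix is invertible
  set M : Matrix (Fin k) (Fin k) F := (Pi.basisFun F (Fin k)).toMatrix B' with hMdef
  have hM : ∀ a c, M a c = G0 a (s' c) := by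
    intro a c
    have : G0 a (s' c) = G0ᵀ (s' c) a := rfl
    rw [this, hs' c]
    simp [hMdef, Module.Basis.toMatrix_apply]
  letI : Invertible M := (Pi.basisFun F (Fin k)).invertibleToMatrix B'
  set Minv : Matrix (Fin k) (Fin k) F := ⅟M with hMinvdef
  have hMinvM : Minv * M = 1 := invOf_mul_self M
  -- set up the recursion data
  set Gc : ℕ → Fin k → Fin n → F := fun r a b => (G a b).coeff r with hGcdef
  have hGc0 : ∀ a b, Gc 0 a b = G0 a b := by
    intro a b
    simp [hGcdef, hG0def, Polynomial.coeff_zero_eq_eval_zero]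
  set uc : ℕ → Fin k → F := fun s a => (u a).coeff s with hucdef
  set W : ℕ → Fin k → F := extW Gc i uc s' Minv with hWdef
  have hWlow : ∀ t ≤ i, W t = uc t := by
    intro t ht
    show extW Gc i uc s' Minv t = uc t
    rw [extW]
    exact if_pos ht
  set u' : Fin k → Polynomial F :=
    fun a => ∑ t ∈ Finset.range (j + 1), Polynomial.C (W t a) * X ^ t with hu'def
  have hu'coeff : ∀ a, ∀ s ≤ j, (u' a).coeff s = W s a := by
    intro a s hs
    rw [hu'def]
    simp only [Polynomial.finset_sum_coeff, Polynomial.coeff_C_mul, Polynomial.coeff_X_pow,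
      mul_ite, mul_one, mul_zero]
    rw [Finset.sum_ite_eq (Finset.range (j + 1)) s fun t => W t a]
    simp [Nat.lt_succ_of_le hs]
  set v' : Fin n → Polynomial F := Matrix.vecMul u' G with hv'def
  have key : ∀ b, ∀ t ≤ j, (v' b).coeff t
      = ∑ s ∈ Finset.range (t + 1), ∑ a, W s a * Gc (t - s) a b := by
    intro b t ht
    rw [hv'def, coeff_vecMul]
    refine Finset.sum_congr rfl fun s hs => Finset.sum_congr rfl fun a _ => ?_
    rw [hu'coeff a s (le_trans (Nat.lt_succ_iff.mp (Finset.mem_range.mp hs)) ht)]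
  refine ⟨v', ⟨u', by rw [Matrix.vecMulLinear_apply]⟩, ?_, ?_⟩
  · -- coefficients up to i agree
    intro b t ht
    rw [key b t (le_trans ht hij), coeff_vecMul]
    refine Finset.sum_congr rfl fun s hs => Finset.sum_congr rfl fun a _ => ?_
    have hsle : s ≤ i := le_trans (Nat.lt_succ_iff.mp (Finset.mem_range.mp hs)) ht
    rw [hWlow s hsle]
  · -- weights in (i, j] are at most n - k
    intro t hti htj
    have hzero : ∀ c, (v' (s' c)).coeff t = 0 := by
      intro c
      rw [key _ t htj, Finset.sum_range_succ]
      have h1 : ∑ a, W t a * Gc (t - t) a (s' c) = Matrix.vecMul (W t) M c := by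
        rw [Nat.sub_self]
        simp only [Matrix.vecMul, dotProduct]
        refine Finset.sum_congr rfl fun a _ => ?_
        rw [hGc0, ← hM]
      rw [h1]
      have h2 : W t = Matrix.vecMul (fun c => -(∑ s ∈ Finset.range t,
          ∑ a, W s a * Gc (t - s) a (s' c))) Minv := by
        rw [hWdef, extW, if_neg (not_le.mpr hti)]
        have hat : ∀ c : Fin k, (∑ s ∈ (Finset.range t).attach,
            ∑ a, extW Gc i uc s' Minv s.1 a * Gc (t - s.1) a (s' c))
            = ∑ s ∈ Finset.range t, ∑ a, extW Gc i uc s' Minv s a * Gc (t - s) a (s' c) :=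
          fun c => Finset.sum_attach (Finset.range t)
            (fun s => ∑ a, extW Gc i uc s' Minv s a * Gc (t - s) a (s' c))
        simp only [hat]
      rw [h2, Matrix.vecMul_vecMul, hMinvM, Matrix.vecMul_one]
      ring
    -- count nonzero entries
    have hsub : (Finset.univ.filter fun b => (v' b).coeff t ≠ 0)
        ⊆ Finset.univ \ Finset.univ.image s' := by
      intro b hb
      simp only [Finset.mem_filter, Finset.mem_univ, true_and] at hb
      simp only [Finset.mem_sdiff, Finset.mem_univ, true_and]
      intro hmem
      obtain ⟨c, -, hc⟩ := Finset.mem_image.mp hmem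
      exact hb (hc ▸ hzero c)
    calc coeffWt v' t ≤ (Finset.univ \ Finset.univ.image s').card :=
          Finset.card_le_card hsub
      _ = n - k := by
          rw [Finset.card_sdiff_of_subset (Finset.subset_univ _),
            Finset.card_image_of_injective _ hs'inj]
          simp

/-- There is a nonzero vector in the row space of a full-rank `k × n` matrix
with at most `n - k + 1` nonzero entries (Singleton bound). -/
lemma exists_head {F : Type*} [Field F] {k n : ℕ} (hk : 0 < k) (hkn : k < n)
    (G0 : Matrix (Fin k) (Fin n) F) (hG0 : G0.rank = k) :
    ∃ u0 : Fin k → F, Matrix.vecMul u0 G0 ≠ 0 ∧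
      (Finset.univ.filter fun b => Matrix.vecMul u0 G0 b ≠ 0).card ≤ n - k + 1 := by
  set R := LinearMap.range (Matrix.vecMulLinear G0) with hRdef
  have hfR : Module.finrank F R = k := by
    have h1 : Matrix.vecMulLinear G0 = Matrix.mulVecLin G0ᵀ := by
      apply LinearMap.ext; intro x
      rw [Matrix.vecMulLinear_apply, Matrix.mulVecLin_apply, Matrix.mulVec_transpose]
    have h2 : G0ᵀ.rank = k := by rw [Matrix.rank_transpose, hG0]
    rw [hRdef, h1]
    exact h2
  set e : Fin (k - 1) → Fin n := fun m => ⟨m.1, by have := m.2; omega⟩ with hedef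
  have heinj : Function.Injective e := by
    intro m1 m2 h
    simpa [hedef, Fin.ext_iff] using h
  set φ : (Fin n → F) →ₗ[F] (Fin (k - 1) → F) :=
    LinearMap.pi (fun m => LinearMap.proj (e m)) with hφdef
  set f : R →ₗ[F] (Fin (k - 1) → F) := φ.comp R.subtype with hfdef
  have hrn := LinearMap.finrank_range_add_finrank_ker f
  have hrange : Module.finrank F (LinearMap.range f) ≤ k - 1 := by
    calc Module.finrank F (LinearMap.range f)
        ≤ Module.finrank F (Fin (k - 1) → F) := Submodule.finrank_le _
      _ = k - 1 := Module.finrank_fin_fun F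
  have hker : LinearMap.ker f ≠ ⊥ := by
    intro h
    rw [h, finrank_bot] at hrn
    rw [hfR] at hrn
    omega
  obtain ⟨x, hxker, hxne⟩ := (Submodule.ne_bot_iff _).mp hker
  obtain ⟨u0, hu0⟩ := x.2
  have hveq : Matrix.vecMul u0 G0 = (x : Fin n → F) := by
    rw [← hu0, Matrix.vecMulLinear_apply]
  have hvne : (x : Fin n → F) ≠ 0 := fun h => hxne (Subtype.ext h)
  have hzero : ∀ m, (x : Fin n → F) (e m) = 0 := by
    intro m
    have := congrFun (show f x = 0 from hxker) m
    simpa [hfdef, hφdef] using this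
  refine ⟨u0, by rw [hveq]; exact hvne, ?_⟩
  have hsub : (Finset.univ.filter fun b => Matrix.vecMul u0 G0 b ≠ 0)
      ⊆ Finset.univ \ Finset.univ.image e := by
    intro b hb
    simp only [Finset.mem_filter, Finset.mem_univ, true_and] at hb
    simp only [Finset.mem_sdiff, Finset.mem_univ, true_and]
    intro hmem
    obtain ⟨m, -, hm⟩ := Finset.mem_image.mp hmem
    apply hb
    rw [hveq, ← hm]
    exact hzero m
  calc (Finset.univ.filter fun b => Matrix.vecMul u0 G0 b ≠ 0).card
      ≤ (Finset.univ \ Finset.univ.image e).card := Finset.card_le_card hsub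
    _ = n - (k - 1) := by
        rw [Finset.card_sdiff_of_subset (Finset.subset_univ _),
          Finset.card_image_of_injective _ heinj]
        simp
    _ ≤ n - k + 1 := by omega


/-- If a delay-free `(n,k,δ)` convolutional code attains `d_j^c = (n-k)(j+1)+1`
for some `j`, then `d_i^c = (n-k)(i+1)+1` for all `i ≤ j`. -/
theorem colDist_max_descends {F : Type*} [Field F] [Fintype F] {k n : ℕ}
    (hk : 0 < k) (hkn : k < n)
    (G : Matrix (Fin k) (Fin n) (Polynomial F))
    (hG : (G.map (fun p => p.eval 0)).rank = k)
    (C : Submodule (Polynomial F) (Fin n → Polynomial F))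
    (hC : C = LinearMap.range (Matrix.vecMulLinear G))
    (j : ℕ) (hmax : colDist C j = (n - k) * (j + 1) + 1) :
    ∀ i ≤ j, colDist C i = (n - k) * (i + 1) + 1 := by
  intro i hij
  set G0 : Matrix (Fin k) (Fin n) F := G.map (fun p => p.eval 0) with hG0def
  -- a low-weight delay-free codeword giving the upper bound
  obtain ⟨u0, hu0ne, hu0wt⟩ := exists_head hk hkn G0 hG
  obtain ⟨v'', hv''mem, hv''match, hv''wt⟩ :=
    extension G hG (fun a => Polynomial.C (u0 a)) 0 i (Nat.zero_le i)
  have hcoe0 : ∀ b, (v'' b).coeff 0 = Matrix.vecMul u0 G0 b := by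
    intro b
    rw [hv''match b 0 le_rfl, coeff_vecMul]
    simp [Matrix.vecMul, dotProduct, hG0def, Polynomial.coeff_zero_eq_eval_zero]
  obtain ⟨b1, hb1⟩ := Function.ne_iff.mp hu0ne
  have hS : (∑ t ∈ Finset.range (i + 1), coeffWt v'' t) ∈
      {d | ∃ v ∈ C, (∃ b, (v b).coeff 0 ≠ 0) ∧
        d = ∑ t ∈ Finset.range (i + 1), coeffWt v t} := by
    refine ⟨v'', by rw [hC]; exact hv''mem, ⟨b1, ?_⟩, rfl⟩
    rw [hcoe0 b1]; exact hb1
  have hupper : colDist C i ≤ (n - k) * (i + 1) + 1 := by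
    have hle : colDist C i ≤ ∑ t ∈ Finset.range (i + 1), coeffWt v'' t := Nat.sInf_le hS
    have h0 : coeffWt v'' 0 ≤ n - k + 1 := by
      have hfe : (Finset.univ.filter fun b => (v'' b).coeff 0 ≠ 0)
          = (Finset.univ.filter fun b => Matrix.vecMul u0 G0 b ≠ 0) := by
        apply Finset.filter_congr
        intro b _
        rw [hcoe0 b]
      rw [coeffWt, hfe]
      exact hu0wt
    have hrest : ∑ t ∈ Finset.range i, coeffWt v'' (t + 1) ≤ i * (n - k) := by
      calc ∑ t ∈ Finset.range i, coeffWt v'' (t + 1)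
          ≤ (Finset.range i).card • (n - k) := by
            refine Finset.sum_le_card_nsmul _ _ _ ?_
            intro t ht
            exact hv''wt (t + 1) (Nat.succ_pos t)
              (Nat.succ_le_of_lt (Finset.mem_range.mp ht))
        _ = i * (n - k) := by rw [Finset.card_range, smul_eq_mul]
    have hsum : ∑ t ∈ Finset.range (i + 1), coeffWt v'' t
        = (∑ t ∈ Finset.range i, coeffWt v'' (t + 1)) + coeffWt v'' 0 :=
      Finset.sum_range_succ' _ i
    have : ∑ t ∈ Finset.range (i + 1), coeffWt v'' t ≤ (n - k) * (i + 1) + 1 := by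
      rw [hsum]
      have harith : i * (n - k) + (n - k + 1) = (n - k) * (i + 1) + 1 := by ring
      omega
    exact le_trans hle this
  -- the lower bound: no codeword window of weight ≤ (n-k)(i+1) can exist
  have hlower : (n - k) * (i + 1) + 1 ≤ colDist C i := by
    refine le_csInf ⟨_, hS⟩ ?_
    intro d hd
    by_contra hlt
    push_neg at hlt
    have hdle : d ≤ (n - k) * (i + 1) := by omega
    obtain ⟨v, hvC, ⟨b0, hb0⟩, hdval⟩ := hd
    rw [hC] at hvC
    obtain ⟨u, hu⟩ := hvC
    obtain ⟨v', hv'mem, hmatch, hwt⟩ := extension G hG u i j hij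
    have hmatch' : ∀ b, ∀ t ≤ i, (v' b).coeff t = (v b).coeff t := by
      intro b t ht
      rw [hmatch b t ht, show Matrix.vecMul u G = v from by
        rw [← hu, Matrix.vecMulLinear_apply]]
    have hwtlow : ∀ t ≤ i, coeffWt v' t = coeffWt v t := by
      intro t ht
      rw [coeffWt, coeffWt]
      congr 1
      apply Finset.filter_congr
      intro b _
      rw [hmatch' b t ht]
    have hsplit : (∑ t ∈ Finset.range (i + 1), coeffWt v' t)
        + ∑ t ∈ Finset.Ico (i + 1) (j + 1), coeffWt v' t
        = ∑ t ∈ Finset.range (j + 1), coeffWt v' t := by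
      rw [Finset.range_eq_Ico, Finset.range_eq_Ico]
      exact Finset.sum_Ico_consecutive (coeffWt v') (Nat.zero_le (i + 1)) (Nat.succ_le_succ hij)
    have hfirst : ∑ t ∈ Finset.range (i + 1), coeffWt v' t = d := by
      rw [hdval]
      refine Finset.sum_congr rfl fun t ht => ?_
      exact hwtlow t (Nat.lt_succ_iff.mp (Finset.mem_range.mp ht))
    have hsecond : ∑ t ∈ Finset.Ico (i + 1) (j + 1), coeffWt v' t ≤ (j - i) * (n - k) := by
      calc ∑ t ∈ Finset.Ico (i + 1) (j + 1), coeffWt v' t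
          ≤ (Finset.Ico (i + 1) (j + 1)).card • (n - k) := by
            refine Finset.sum_le_card_nsmul _ _ _ ?_
            intro t ht
            obtain ⟨ht1, ht2⟩ := Finset.mem_Ico.mp ht
            exact hwt t ht1 (Nat.lt_succ_iff.mp ht2)
        _ = (j - i) * (n - k) := by
            rw [Nat.card_Ico, smul_eq_mul]
            congr 1
            omega
    have hSj : (∑ t ∈ Finset.range (j + 1), coeffWt v' t) ∈
        {d | ∃ v ∈ C, (∃ b, (v b).coeff 0 ≠ 0) ∧
          d = ∑ t ∈ Finset.range (j + 1), coeffWt v t} := by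
      refine ⟨v', by rw [hC]; exact hv'mem, ⟨b0, ?_⟩, rfl⟩
      rw [hmatch' b0 0 (Nat.zero_le i)]
      exact hb0
    have hj_le : colDist C j ≤ ∑ t ∈ Finset.range (j + 1), coeffWt v' t := Nat.sInf_le hSj
    have htot : ∑ t ∈ Finset.range (j + 1), coeffWt v' t ≤ (n - k) * (j + 1) := by
      rw [← hsplit, hfirst]
      have harith : (n - k) * (i + 1) + (j - i) * (n - k) = (n - k) * (j + 1) := by
        have h1 : i + 1 + (j - i) = j + 1 := by omega
        calc (n - k) * (i + 1) + (j - i) * (n - k)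
            = (n - k) * ((i + 1) + (j - i)) := by ring
          _ = (n - k) * (j + 1) := by rw [h1]
      omega
    omega
  omega
end

section
/- Let C be a delay-free (n,k,δ) convolutional code with d_j^c = (n-k)(j+1)+1 for some j. If (G_j^c)^r is obtained from the sliding generator matrix G_j^c by erasing e_t columns from the t-th block of n columns (t = 0,…,j) such that Σ_{t=0}^{j} e_t ≤ d_j^c − 1 and Σ_{t=0}^{i} e_t ≥ d_i^c for all i ∈ {0,…,j−1}, then (G_j^c)^r has full row rank. -/
open Polynomial Matrix
open scoped Classical

/-- The sliding (block upper-triangular Toeplitz) generator matrix `G_j^c`, with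
block `(s,t)` equal to `G_{t-s}` for `t ≥ s` and `0` otherwise. -/
def slidingG {F : Type*} [Field F] {k n : ℕ} (G : ℕ → Matrix (Fin k) (Fin n) F) (j : ℕ) :
    Matrix (Fin (j + 1) × Fin k) (Fin (j + 1) × Fin n) F :=
  fun r c => if r.1.val ≤ c.1.val then G (c.1.val - r.1.val) r.2 c.2 else 0

/-- The weight (number of nonzero entries) of a vector. -/
noncomputable def vecWt {F : Type*} [Field F] {ι : Type*} [Fintype ι] (w : ι → F) : ℕ :=
  (Finset.univ.filter fun c => w c ≠ 0).card

lemma exists_coset_vanish {F : Type*} [Field F] {ι : Type*} [Fintype ι] (m : ℕ) :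
    ∀ (V : Submodule F (ι → F)), Module.finrank F V = m → ∀ w : ι → F,
    ∃ v ∈ V, ∃ S : Finset ι, S.card = m ∧ (∀ i ∈ S, ∃ x ∈ V, x i ≠ 0) ∧
      ∀ i ∈ S, w i = v i := by
  induction m using Nat.strong_induction_on with
  | _ m IH =>
    intro V hV w
    rcases Nat.eq_zero_or_pos m with hm | hm
    · exact ⟨0, V.zero_mem, ∅, by simp [hm]⟩
    · have hVbot : V ≠ ⊥ := by
        intro h; rw [h, finrank_bot] at hV; omega
      obtain ⟨v₀, hv₀V, hv₀⟩ := Submodule.exists_mem_ne_zero_of_ne_bot hVbot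
      obtain ⟨i, hi⟩ : ∃ i, v₀ i ≠ 0 := by
        by_contra h; push_neg at h; exact hv₀ (funext h)
      set K := LinearMap.ker (LinearMap.proj i : (ι → F) →ₗ[F] F) with hK
      have hKrank : Module.finrank F K + 1 = Fintype.card ι := by
        have h1 := LinearMap.finrank_range_add_finrank_ker
          (LinearMap.proj i : (ι → F) →ₗ[F] F)
        have h2 : LinearMap.range (LinearMap.proj i : (ι → F) →ₗ[F] F) = ⊤ := by
          rw [LinearMap.range_eq_top]
          exact fun y => ⟨fun _ => y, rfl⟩
        rw [h2] at h1
        have h3 : Module.finrank F ↥(⊤ : Submodule F F) = 1 := by simp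
        rw [h3, Module.finrank_pi, ← hK] at h1
        omega
      set V' : Submodule F (ι → F) := V ⊓ K with hV'
      have hlt : Module.finrank F V' < m := by
        rw [← hV]
        refine Submodule.finrank_lt_finrank_of_lt ?_
        refine lt_of_le_of_ne inf_le_left ?_
        intro h
        have : v₀ ∈ V' := h ▸ hv₀V
        exact hi (this.2)
      have hge : m - 1 ≤ Module.finrank F V' := by
        have h1 := Submodule.finrank_sup_add_finrank_inf_eq V K
        have h2 : Module.finrank F ↥(V ⊔ K) ≤ Fintype.card ι := by
          calc Module.finrank F ↥(V ⊔ K) ≤ Module.finrank F (ι → F) :=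
            Submodule.finrank_le _
          _ = Fintype.card ι := by rw [Module.finrank_pi]
        rw [hV, ← hV'] at h1
        omega
      have hV'rank : Module.finrank F V' = m - 1 := by omega
      set c : F := w i / v₀ i with hc
      set w' : ι → F := w - c • v₀ with hw'
      obtain ⟨v', hv'V', S', hS'card, hS'supp, hS'eq⟩ := IH (m-1) (by omega) V' hV'rank w'
      have hiS' : i ∉ S' := by
        intro h
        obtain ⟨x, hxV', hxi⟩ := hS'supp i h
        exact hxi hxV'.2
      refine ⟨v' + c • v₀, V.add_mem hv'V'.1 (V.smul_mem c hv₀V), insert i S', ?_, ?_, ?_⟩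
      · rw [Finset.card_insert_of_notMem hiS', hS'card]; omega
      · intro i' hi'
        rcases Finset.mem_insert.mp hi' with h | h
        · exact ⟨v₀, hv₀V, h ▸ hi⟩
        · obtain ⟨x, hxV', hxi⟩ := hS'supp i' h
          exact ⟨x, hxV'.1, hxi⟩
      · intro i' hi'
        rcases Finset.mem_insert.mp hi' with h | h
        · subst h
          have hv'i : v' i' = 0 := hv'V'.2
          simp only [Pi.add_apply, Pi.smul_apply, smul_eq_mul, hv'i, zero_add, hc]
          rw [div_mul_cancel₀ _ hi]
        · have := hS'eq i' h
          simp only [hw', Pi.sub_apply, Pi.smul_apply, smul_eq_mul] at this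
          simp only [Pi.add_apply, Pi.smul_apply, smul_eq_mul]
          linear_combination this

lemma exists_low_weight_coset {F : Type*} [Field F] {k n : ℕ}
    (G0 : Matrix (Fin k) (Fin n) F) (hG : G0.rank = k) (w : Fin n → F) :
    ∃ x : Fin k → F, vecWt (fun b => w b - Matrix.vecMul x G0 b) ≤ n - k := by
  set V : Submodule F (Fin n → F) := LinearMap.range (Matrix.mulVecLin G0ᵀ) with hV
  have hVrank : Module.finrank F V = k := by
    have : (G0ᵀ).rank = k := by rw [Matrix.rank_transpose, hG]
    simpa [Matrix.rank] using this
  obtain ⟨v, hvV, S, hScard, -, hSeq⟩ := exists_coset_vanish k V hVrank w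
  obtain ⟨x, hx⟩ := hvV
  refine ⟨x, ?_⟩
  have hvx : ∀ b, Matrix.vecMul x G0 b = v b := by
    intro b
    rw [← hx]
    rw [Matrix.mulVecLin_apply, Matrix.mulVec_transpose]
  have hsub : (Finset.univ.filter fun b => (w b - Matrix.vecMul x G0 b) ≠ 0) ⊆ Sᶜ := by
    intro b hb
    simp only [Finset.mem_filter, Finset.mem_univ, true_and] at hb
    rw [Finset.mem_compl]
    intro hbS
    exact hb (by rw [hvx, hSeq b hbS, sub_self])
  calc vecWt (fun b => w b - Matrix.vecMul x G0 b) ≤ Sᶜ.card := Finset.card_le_card hsub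
  _ = n - k := by rw [Finset.card_compl, hScard, Fintype.card_fin]

/-- The `i`-th column distance computed from the sliding generator matrix. -/
noncomputable def colDistM {F : Type*} [Field F] {k n : ℕ}
    (G : ℕ → Matrix (Fin k) (Fin n) F) (i : ℕ) : ℕ :=
  sInf { d | ∃ u : Fin (i + 1) × Fin k → F, (∃ a : Fin k, u (0, a) ≠ 0) ∧
    d = vecWt (Matrix.vecMul u (slidingG G i)) }

lemma colDistM_le {F : Type*} [Field F] {k n : ℕ} (G : ℕ → Matrix (Fin k) (Fin n) F)
    (i : ℕ) (u : Fin (i + 1) × Fin k → F) (hu : ∃ a, u (0, a) ≠ 0) :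
    colDistM G i ≤ vecWt (Matrix.vecMul u (slidingG G i)) :=
  Nat.sInf_le ⟨u, hu, rfl⟩

lemma colDistM_mem {F : Type*} [Field F] {k n : ℕ} (hk : 0 < k)
    (G : ℕ → Matrix (Fin k) (Fin n) F) (i : ℕ) :
    ∃ u : Fin (i + 1) × Fin k → F, (∃ a : Fin k, u (0, a) ≠ 0) ∧
      colDistM G i = vecWt (Matrix.vecMul u (slidingG G i)) := by
  have hne : { d | ∃ u : Fin (i + 1) × Fin k → F, (∃ a : Fin k, u (0, a) ≠ 0) ∧
      d = vecWt (Matrix.vecMul u (slidingG G i)) }.Nonempty := by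
    refine ⟨_, fun p => if p.1 = 0 then (1:F) else 0, ⟨⟨0, hk⟩, by simp⟩, rfl⟩
  unfold colDistM
  exact Nat.sInf_mem hne

lemma vecMul_apply' {F : Type*} [Field F] {ι κ : Type*} [Fintype ι] [Fintype κ]
    (u : ι → F) (M : Matrix ι κ F) (c : κ) :
    Matrix.vecMul u M c = ∑ r, u r * M r c := by
  simp [Matrix.vecMul, dotProduct]

lemma colDistM_succ_le {F : Type*} [Field F] {k n : ℕ} (hk : 0 < k)
    (G : ℕ → Matrix (Fin k) (Fin n) F) (hDF : (G 0).rank = k) (i : ℕ) :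
    colDistM G (i + 1) ≤ colDistM G i + (n - k) := by
  obtain ⟨u, hu0, hu⟩ := colDistM_mem hk G i
  set w : Fin n → F := fun b => ∑ t : Fin (i + 1), ∑ a : Fin k,
    u (t, a) * G (i + 1 - t.val) a b with hw
  obtain ⟨x, hx⟩ := exists_low_weight_coset (G 0) hDF w
  set uP : Fin (i + 2) × Fin k → F :=
    fun p => if h : p.1.val < i + 1 then u (⟨p.1.val, h⟩, p.2) else -(x p.2) with huP
  set vP := Matrix.vecMul uP (slidingG G (i + 1)) with hvP
  set v := Matrix.vecMul u (slidingG G i) with hv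
  have claim1 : ∀ (c : Fin (i + 2) × Fin n) (hc : c.1.val < i + 1),
      vP c = v (⟨c.1.val, hc⟩, c.2) := by
    intro c hc
    rw [hvP, hv, vecMul_apply', vecMul_apply', Fintype.sum_prod_type, Fintype.sum_prod_type,
      Fin.sum_univ_castSucc]
    have hlast : ∑ a : Fin k, uP (Fin.last (i + 1), a) *
        slidingG G (i + 1) (Fin.last (i + 1), a) c = 0 := by
      apply Finset.sum_eq_zero
      intro a _
      have h0 : ¬ ((i + 1 : ℕ) ≤ c.1.val) := by omega
      simp [slidingG, Fin.val_last, h0]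
    rw [hlast, add_zero]
    apply Finset.sum_congr rfl
    intro t _
    apply Finset.sum_congr rfl
    intro a _
    have h1 : uP (t.castSucc, a) = u (t, a) := by
      rw [huP]
      simp only
      rw [dif_pos (by simp; omega)]
      rfl
    rw [h1]
    try congr 1
    all_goals simp [slidingG, Fin.coe_castSucc]
  have claim2 : ∀ c : Fin (i + 2) × Fin n, c.1.val = i + 1 →
      vP c = w c.2 - Matrix.vecMul x (G 0) c.2 := by
    intro c hc
    rw [hvP, vecMul_apply', Fintype.sum_prod_type, Fin.sum_univ_castSucc]
    have hlast : ∑ a : Fin k, uP (Fin.last (i + 1), a) *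
        slidingG G (i + 1) (Fin.last (i + 1), a) c = -(Matrix.vecMul x (G 0) c.2) := by
      rw [vecMul_apply']
      rw [← Finset.sum_neg_distrib]
      apply Finset.sum_congr rfl
      intro a _
      have h1 : uP (Fin.last (i + 1), a) = -(x a) := by
        rw [huP]; simp only
        rw [dif_neg (by simp)]
      rw [h1]
      have h2 : slidingG G (i + 1) (Fin.last (i + 1), a) c = G 0 a c.2 := by
        simp [slidingG, hc]
      rw [h2]
      ring
    rw [hlast]
    have hmain : ∀ t : Fin (i + 1), ∀ a : Fin k,
        uP (t.castSucc, a) * slidingG G (i + 1) (t.castSucc, a) c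
          = u (t, a) * G (i + 1 - t.val) a c.2 := by
      intro t a
      have h1 : uP (t.castSucc, a) = u (t, a) := by
        rw [huP]; simp only; rw [dif_pos (by simp; omega)]; rfl
      have h2 : slidingG G (i + 1) (t.castSucc, a) c = G (i + 1 - t.val) a c.2 := by
        have hle : (t.castSucc).val ≤ c.1.val := by
          simp only [Fin.coe_castSucc]; omega
        simp [slidingG, hle, hc, Fin.coe_castSucc]
      rw [h1, h2]
    rw [sub_eq_add_neg, hw]
    congr 1
    simp only
    apply Finset.sum_congr rfl
    intro t _
    apply Finset.sum_congr rfl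
    intro a _
    exact hmain t a
  -- weight bookkeeping
  have hwt : vecWt vP ≤ vecWt v + (n - k) := by
    have hsplit := Finset.card_filter_add_card_filter_not
      (s := Finset.univ.filter fun c : Fin (i + 2) × Fin n => vP c ≠ 0)
      (fun c => c.1.val < i + 1)
    have h1 : (((Finset.univ.filter fun c : Fin (i + 2) × Fin n => vP c ≠ 0)).filter
        (fun c => c.1.val < i + 1)).card ≤ vecWt v := by
      apply Finset.card_le_card_of_injOn
        (fun c => ((⟨min c.1.val i, by omega⟩ : Fin (i + 1)), c.2))
      · intro c hcmem
        simp only [Finset.mem_coe, Finset.mem_filter, Finset.mem_univ, true_and] at hcmem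
        obtain ⟨hne, hlt⟩ := hcmem
        simp only [vecWt, Finset.mem_coe, Finset.mem_filter, Finset.mem_univ, true_and]
        have hmin : min c.1.val i = c.1.val := by omega
        have := claim1 c hlt
        rw [this] at hne
        convert hne using 3
        exact Fin.ext hmin
      · intro c1 hc1 c2 hc2 heq
        simp only [Finset.coe_filter, Finset.mem_filter, Finset.mem_univ, true_and,
          Set.mem_setOf_eq] at hc1 hc2
        have e1 := congrArg Prod.fst heq
        have e2 := congrArg Prod.snd heq
        simp only at e1 e2
        have hcc : c1.1.val = c2.1.val := by
          have := congrArg Fin.val e1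
          simp only at this
          omega
        exact Prod.ext (Fin.ext hcc) e2
    have h2 : (((Finset.univ.filter fun c : Fin (i + 2) × Fin n => vP c ≠ 0)).filter
        (fun c => ¬ (c.1.val < i + 1))).card ≤ n - k := by
      have hsu : (((Finset.univ.filter fun c : Fin (i + 2) × Fin n => vP c ≠ 0)).filter
          (fun c => ¬ (c.1.val < i + 1))).card ≤
          (Finset.univ.filter fun b : Fin n =>
            (fun b => w b - Matrix.vecMul x (G 0) b) b ≠ 0).card := by
        apply Finset.card_le_card_of_injOn (fun c => c.2)
        · intro c hcmem
          simp only [Finset.mem_coe, Finset.mem_filter, Finset.mem_univ, true_and] at hcmem ⊢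
          obtain ⟨hne, hge⟩ := hcmem
          have hc1 : c.1.val = i + 1 := by have := c.1.isLt; omega
          rw [claim2 c hc1] at hne
          exact hne
        · intro c1 hc1 c2 hc2 heq
          simp only [Finset.coe_filter, Set.mem_setOf_eq] at hc1 hc2
          have e1 : c1.1.val = i + 1 := by have := c1.1.isLt; have := hc1.2; omega
          have e2 : c2.1.val = i + 1 := by have := c2.1.isLt; have := hc2.2; omega
          exact Prod.ext (Fin.ext (by omega)) heq
      exact le_trans hsu hx
    calc vecWt vP = _ := (hsplit).symm
    _ ≤ vecWt v + (n - k) := by exact Nat.add_le_add h1 h2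
  have hstep : colDistM G (i + 1) ≤ vecWt vP := by
    apply colDistM_le
    obtain ⟨a, ha⟩ := hu0
    refine ⟨a, ?_⟩
    have h0 : uP (0, a) = u (0, a) := by
      rw [huP]; simp only
      rw [dif_pos (by simp)]
      congr 1
    rw [h0]
    exact ha
  omega

lemma colDistM_window_le {F : Type*} [Field F] {k n : ℕ} (hk : 0 < k)
    (G : ℕ → Matrix (Fin k) (Fin n) F) (hDF : (G 0).rank = k) (i d : ℕ) :
    colDistM G (i + d) ≤ colDistM G i + (n - k) * d := by
  induction d with
  | zero => simp
  | succ d IH =>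
    have h := colDistM_succ_le hk G hDF (i + d)
    have hmul : (n - k) * (d + 1) = (n - k) * d + (n - k) := by ring
    have hidx : i + (d + 1) = (i + d) + 1 := by omega
    rw [hidx]
    omega

/-- For a delay-free code with `d_j^c = (n-k)(j+1)+1`: erasing `e_t` columns in the
`t`-th block of `n` columns of `G_j^c` with `Σ e_t ≤ d_j^c - 1` and `Σ_{t≤i} e_t ≥ d_i^c`
for all `i < j` leaves a matrix of full row rank. -/
theorem restricted_slidingG_fullRowRank {F : Type*} [Field F] [Fintype F] {k n : ℕ}
    (hk : 0 < k) (hkn : k < n)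
    (G : ℕ → Matrix (Fin k) (Fin n) F)
    (hDF : (G 0).rank = k)
    (j : ℕ)
    (hmax : colDistM G j = (n - k) * (j + 1) + 1)
    (E : Finset (Fin (j + 1) × Fin n))
    (he1 : E.card ≤ colDistM G j - 1)
    (he2 : ∀ i < j, colDistM G i ≤ (E.filter fun c => c.1.val ≤ i).card) :
    (Matrix.of fun (r : Fin (j + 1) × Fin k) (c : {c : Fin (j + 1) × Fin n // c ∉ E}) =>
        slidingG G j r c.val).rank = (j + 1) * k := by
  set M := (Matrix.of fun (r : Fin (j + 1) × Fin k) (c : {c : Fin (j + 1) × Fin n // c ∉ E}) =>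
        slidingG G j r c.val) with hM
  have hbound : ∀ i ≤ j, (n - k) * (i + 1) + 1 ≤ colDistM G i := by
    intro i hij
    have h := colDistM_window_le hk G hDF i (j - i)
    have hji : i + (j - i) = j := by omega
    rw [hji, hmax] at h
    have hmul : (n - k) * (j + 1) = (n - k) * (i + 1) + (n - k) * (j - i) := by
      rw [← Nat.mul_add]; congr 1; omega
    omega
  have key : ∀ u : Fin (j + 1) × Fin k → F, Matrix.vecMul u M = 0 → u = 0 := by
    intro u hu
    by_contra hune
    set v := Matrix.vecMul u (slidingG G j) with hv
    have hvE : ∀ c, c ∉ E → v c = 0 := by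
      intro c hc
      have h := congrFun hu ⟨c, hc⟩
      rw [vecMul_apply'] at h
      rw [hv, vecMul_apply']
      simpa [hM] using h
    have hTne : (Finset.univ.filter fun t : Fin (j + 1) => ∃ a, u (t, a) ≠ 0).Nonempty := by
      have : ∃ p, u p ≠ 0 := by
        by_contra h; push_neg at h; exact hune (funext h)
      obtain ⟨p, hp⟩ := this
      exact ⟨p.1, by
        simp only [Finset.mem_filter, Finset.mem_univ, true_and]
        exact ⟨p.2, by rwa [Prod.mk.eta]⟩⟩
    set s := (Finset.univ.filter fun t : Fin (j + 1) => ∃ a, u (t, a) ≠ 0).min' hTne with hs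
    have hsmem := Finset.min'_mem _ hTne
    rw [← hs] at hsmem
    simp only [Finset.mem_filter, Finset.mem_univ, true_and] at hsmem
    have hsmin : ∀ p : Fin (j + 1) × Fin k, p.1.val < s.val → u p = 0 := by
      intro p hp
      by_contra hne
      have hmem : p.1 ∈ Finset.univ.filter fun t : Fin (j + 1) => ∃ a, u (t, a) ≠ 0 := by
        simp only [Finset.mem_filter, Finset.mem_univ, true_and]
        exact ⟨p.2, by rwa [Prod.mk.eta]⟩
      have hx := Finset.min'_le _ p.1 hmem
      rw [← hs] at hx
      rw [Fin.le_def] at hx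
      omega
    have hsj : s.val ≤ j := by have := s.isLt; omega
    set m := j - s.val with hm
    set u' : Fin (m + 1) × Fin k → F :=
      fun p => u (⟨s.val + p.1.val, by have := p.1.isLt; omega⟩, p.2) with hu'
    set v' := Matrix.vecMul u' (slidingG G m) with hv'
    have hshift : ∀ (t : Fin (m + 1)) (b : Fin n),
        v' (t, b) = v (⟨s.val + t.val, by have := t.isLt; omega⟩, b) := by
      intro t b
      rw [hv', hv, vecMul_apply', vecMul_apply', Fintype.sum_prod_type, Fintype.sum_prod_type]
      set e : Fin (m + 1) → Fin (j + 1) :=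
        fun t' => ⟨s.val + t'.val, by have := t'.isLt; omega⟩ with he
      have hinj : Function.Injective e := by
        intro a b hab
        have := congrArg Fin.val hab
        simp only [he] at this
        exact Fin.ext (by omega)
      have hsub : Finset.univ.image e ⊆ Finset.univ := Finset.subset_univ _
      have hzero : ∀ q : Fin (j + 1), q ∈ Finset.univ → q ∉ Finset.univ.image e →
          (∑ a : Fin k, u (q, a) * slidingG G j (q, a)
            (⟨s.val + t.val, by have := t.isLt; omega⟩, b)) = 0 := by
        intro q _ hq
        have hqs : q.val < s.val := by
          by_contra h
          push_neg at h
          apply hq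
          refine Finset.mem_image.mpr ⟨⟨q.val - s.val, by have := q.isLt; omega⟩,
            Finset.mem_univ _, ?_⟩
          simp only [he]
          exact Fin.ext (by simp; omega)
        apply Finset.sum_eq_zero
        intro a _
        rw [hsmin (q, a) hqs]
        ring
      rw [← Finset.sum_subset hsub hzero]
      rw [Finset.sum_image (fun x _ y _ h => hinj h)]
      apply Finset.sum_congr rfl
      intro t' _
      apply Finset.sum_congr rfl
      intro a _
      congr 1
      simp only [slidingG, he]
      by_cases hle : t'.val ≤ t.val
      · rw [if_pos hle, if_pos (by simp; omega)]
        have : t.val - t'.val = s.val + t.val - (s.val + t'.val) := by omega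
        rw [this]
      · rw [if_neg hle, if_neg (by simp; omega)]
    have hvlow : ∀ c : Fin (j + 1) × Fin n, c.1.val < s.val → v c = 0 := by
      intro c hc
      rw [hv, vecMul_apply']
      apply Finset.sum_eq_zero
      intro p _
      rcases le_or_gt s.val p.1.val with h | h
      · have hnle : ¬ (p.1.val ≤ c.1.val) := by omega
        simp [slidingG, hnle]
      · rw [hsmin p h]; ring
    -- lower bound on weight of v'
    have hs0 : ∃ a, u' (0, a) ≠ 0 := by
      obtain ⟨a, ha⟩ := hsmem
      refine ⟨a, ?_⟩
      have : u' (0, a) = u (s, a) := rfl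
      rw [this]
      exact ha
    have hmlow : colDistM G m ≤ vecWt v' := colDistM_le G m u' hs0
    -- upper bound on weight of v'
    have hwle : vecWt v' ≤ (E.filter fun c => s.val ≤ c.1.val).card := by
      apply Finset.card_le_card_of_injOn
        (fun p : Fin (m + 1) × Fin n =>
          ((⟨s.val + p.1.val, by have := p.1.isLt; omega⟩ : Fin (j + 1)), p.2))
      · intro p hp
        simp only [vecWt, Finset.mem_coe, Finset.mem_filter, Finset.mem_univ, true_and] at hp
        have hvp : v' (p.1, p.2) ≠ 0 := by rwa [Prod.mk.eta]
        rw [hshift p.1 p.2] at hvp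
        simp only [Finset.mem_coe, Finset.mem_filter]
        constructor
        · by_contra hne
          exact hvp (hvE _ hne)
        · simp
      · intro p1 hp1 p2 hp2 heq
        have e1 := congrArg Prod.fst heq
        have e2 := congrArg Prod.snd heq
        simp only at e1 e2
        have := congrArg Fin.val e1
        simp only at this
        exact Prod.ext (Fin.ext (by omega)) e2
    have hEsplit := Finset.card_filter_add_card_filter_not
      (s := E) (fun c => c.1.val < s.val)
    have hflip : (E.filter fun c => ¬ (c.1.val < s.val)) =
        (E.filter fun c => s.val ≤ c.1.val) := by
      apply Finset.filter_congr
      intro c _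
      simp
    rw [hflip] at hEsplit
    rcases Nat.eq_zero_or_pos s.val with hs0v | hs0v
    · -- s = 0 : m = j
      have hmj : m = j := by omega
      have hmlow' : colDistM G m = colDistM G j := by rw [hmj]
      rw [hmlow', hmax] at hmlow
      have hle2 : (E.filter fun c => s.val ≤ c.1.val).card ≤ E.card :=
        Finset.card_filter_le _ _
      rw [hmax] at he1
      omega
    · -- s > 0
      have hij : s.val - 1 < j := by omega
      have hd1 := he2 (s.val - 1) hij
      have hfeq : (E.filter fun c => c.1.val ≤ s.val - 1) =
          (E.filter fun c => c.1.val < s.val) := by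
        apply Finset.filter_congr
        intro c _
        simp
        omega
      rw [hfeq] at hd1
      have hb1 := hbound (s.val - 1) (by omega)
      have hb2 := hbound m (by omega)
      have hsv : s.val - 1 + 1 = s.val := by omega
      rw [hsv] at hb1
      have hmul : (n - k) * (j + 1) = (n - k) * s.val + (n - k) * (m + 1) := by
        rw [← Nat.mul_add]; congr 1; omega
      rw [hmax] at he1
      omega
  -- conclude full row rank
  have hinj : Function.Injective (Matrix.mulVecLin Mᵀ) := by
    rw [injective_iff_map_eq_zero]
    intro u hu
    apply key
    rw [← Matrix.mulVec_transpose]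
    exact hu
  rw [← Matrix.rank_transpose, Matrix.rank]
  rw [LinearMap.finrank_range_of_inj hinj]
  rw [Module.finrank_pi, Fintype.card_prod, Fintype.card_fin, Fintype.card_fin]
end

section
/- Let C be a delay-free (n,k,δ) convolutional code with j-th column distance d_j^c. If in any sliding window of (j+1)n consecutive symbols of the transmitted codeword at most d_j^c − 1 erasures occur, then the transmitted sequence v(z) can be completely recovered using the generator matrix of C (by iteratively solving the linear systems (u_t,…,u_{t+h})(G_h^c)^r = known right-hand side). -/
open Polynomial Matrix
open scoped Classical

/-- If in any sliding window of `(j+1)n` consecutive symbols at most `d_j^c - 1`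
erasures occur, the transmitted codeword is completely recoverable: any two codewords
agreeing on all non-erased positions coincide. -/
theorem erasure_recovery_with_generator {F : Type*} [Field F] [Fintype F] {k n : ℕ}
    (hk : 0 < k) (hkn : k < n)
    (G : Matrix (Fin k) (Fin n) (Polynomial F))
    (hG : (G.map (fun p => p.eval 0)).rank = k)
    (C : Submodule (Polynomial F) (Fin n → Polynomial F))
    (hC : C = LinearMap.range (Matrix.vecMulLinear G))
    (j : ℕ)
    (E : Set (ℕ × Fin n))
    (hE : ∀ i : ℕ, ({p ∈ E | i ≤ p.1 ∧ p.1 ≤ i + j} : Set (ℕ × Fin n)).ncard ≤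
      colDist C j - 1) :
    ∀ v ∈ C, ∀ w ∈ C,
      (∀ (i : ℕ) (b : Fin n), (i, b) ∉ E → (v b).coeff i = (w b).coeff i) → v = w := by
  intro v hv w hw hagree
  by_contra hne
  -- the difference codeword
  set d : Fin n → Polynomial F := v - w with hd
  have hdC : d ∈ C := C.sub_mem hv hw
  have hdne : d ≠ 0 := sub_ne_zero.mpr hne
  -- nonzero coefficients of d are erased positions
  have hdE : ∀ (i : ℕ) (b : Fin n), (d b).coeff i ≠ 0 → (i, b) ∈ E := by
    intro i b h
    by_contra hnot
    exact h (by simp [hd, coeff_sub, hagree i b hnot])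
  -- existence of a nonzero coefficient
  have hex : ∃ i, ∃ b, (d b).coeff i ≠ 0 := by
    obtain ⟨b, hb⟩ := Function.ne_iff.mp hdne
    have hb' : d b ≠ 0 := by simpa using hb
    obtain ⟨i, hi⟩ : ∃ i, (d b).coeff i ≠ 0 := by
      by_contra h
      push_neg at h
      exact hb' (Polynomial.ext fun i => by simp [h i])
    exact ⟨i, b, hi⟩
  set t : ℕ := Nat.find hex with ht
  obtain ⟨b₀, hb₀⟩ := Nat.find_spec hex
  have hlt : ∀ s < t, ∀ b, (d b).coeff s = 0 := by
    intro s hs b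
    by_contra h
    exact Nat.find_min hex hs ⟨b, h⟩
  -- d = u G
  obtain ⟨u, hu⟩ : ∃ u, G.vecMulLinear u = d := by
    have := hdC; rw [hC] at this; exact this
  have hdu : ∀ b, d b = ∑ a, u a * G a b := by
    intro b
    rw [← hu]
    simp [Matrix.vecMulLinear_apply, Matrix.vecMul, dotProduct]
  -- injectivity of vecMul with G(0)
  set G₀ : Matrix (Fin k) (Fin n) F := G.map (fun p => p.eval 0) with hG₀
  have hinj : Function.Injective G₀.vecMul := by
    rw [Matrix.vecMul_injective_iff]
    apply linearIndependent_iff_card_eq_finrank_span.mpr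
    have : G₀.rank = Module.finrank F (Submodule.span F (Set.range G₀)) :=
      Matrix.rank_eq_finrank_span_row G₀
    rw [hG] at this
    simp only [Fintype.card_fin, Set.finrank]
    have h2 : (Set.range fun i => G₀ i) = Set.range G₀ := rfl
    rw [show Set.range G₀.row = Set.range G₀ from rfl]
    exact this
  -- coefficients of u below t vanish
  have hucoef : ∀ s, s < t → ∀ a, (u a).coeff s = 0 := by
    intro s
    induction s using Nat.strong_induction_on with
    | _ s ih =>
      intro hs a
      have key : (fun a => (u a).coeff s) ᵥ* G₀ = 0 ᵥ* G₀ := by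
        funext b
        have h1 : (d b).coeff s = 0 := hlt s hs b
        rw [hdu b] at h1
        simp only [Polynomial.finset_sum_coeff, Polynomial.coeff_mul] at h1
        have h2 : ∀ a ∈ (Finset.univ : Finset (Fin k)),
            ∑ x ∈ Finset.HasAntidiagonal.antidiagonal s, (u a).coeff x.1 * (G a b).coeff x.2
            = (u a).coeff s * (G a b).coeff 0 := by
          intro a _
          rw [Finset.sum_eq_single (s, 0)]
          · intro x hx hxne
            have hxs : x.1 + x.2 = s := Finset.HasAntidiagonal.mem_antidiagonal.mp hx
            have hx1 : x.1 < s := by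
              rcases Nat.lt_or_ge x.1 s with h | h
              · exact h
              · exfalso
                have : x.1 = s := le_antisymm (by omega) h
                exact hxne (by ext <;> omega)
            rw [ih x.1 hx1 (lt_trans hx1 hs) a, zero_mul]
          · intro hni
            exact absurd (Finset.HasAntidiagonal.mem_antidiagonal.mpr (by simp)) hni
        rw [Finset.sum_congr rfl h2] at h1
        simpa [Matrix.vecMul, dotProduct, hG₀, Matrix.map_apply,
          ← Polynomial.coeff_zero_eq_eval_zero] using h1
      have := hinj key
      exact congr_fun this a
  -- divide u by X^t
  have hdvd : ∀ a, X ^ t ∣ u a := by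
    intro a
    exact Polynomial.X_pow_dvd_iff.mpr (fun s hs => hucoef s hs a)
  choose u' hu' using hdvd
  set d' : Fin n → Polynomial F := G.vecMulLinear u' with hd'
  have hd'C : d' ∈ C := by rw [hC]; exact ⟨u', rfl⟩
  have hd'b : ∀ b, d' b = ∑ a, u' a * G a b := by
    intro b
    simp [hd', Matrix.vecMulLinear_apply, Matrix.vecMul, dotProduct]
  have hshift : ∀ (i : ℕ) (b : Fin n), (d' b).coeff i = (d b).coeff (i + t) := by
    intro i b
    have heq : d b = X ^ t * d' b := by
      rw [hdu b, hd'b b, Finset.mul_sum]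
      exact Finset.sum_congr rfl fun a _ => by rw [hu' a]; ring
    rw [heq, Polynomial.coeff_X_pow_mul]
  have hd'0 : ∃ b, (d' b).coeff 0 ≠ 0 := ⟨b₀, by rw [hshift]; simpa using hb₀⟩
  -- colDist ≤ weight sum of d'
  have hcd : colDist C j ≤ ∑ i ∈ Finset.range (j + 1), coeffWt d' i :=
    Nat.sInf_le ⟨d', hd'C, hd'0, rfl⟩
  -- the support of d' in the window injects into the erased window at t
  set T : Finset (ℕ × Fin n) :=
    (Finset.range (j + 1) ×ˢ Finset.univ).filter (fun p => (d' p.2).coeff p.1 ≠ 0) with hT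
  have hTcard : T.card = ∑ i ∈ Finset.range (j + 1), coeffWt d' i := by
    rw [Finset.card_eq_sum_card_fiberwise (f := Prod.fst) (t := Finset.range (j + 1))
      (fun p hp => (Finset.mem_product.mp (Finset.mem_filter.mp hp).1).1)]
    refine Finset.sum_congr rfl fun i hi => ?_
    have hi_range : i < j + 1 := Finset.mem_range.mp hi
    unfold coeffWt
    apply Finset.card_bij (fun p _ => p.2)
    · intro p hp
      simp only [Finset.mem_filter, Finset.mem_univ, true_and]
      obtain ⟨hp1, hp2⟩ := Finset.mem_filter.mp hp
      obtain ⟨hp3, _⟩ := Finset.mem_filter.mp hp1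
      rw [← hp2]
      exact (Finset.mem_filter.mp hp1).2
    · intro p hp q hq hpq
      obtain ⟨_, hp2⟩ := Finset.mem_filter.mp hp
      obtain ⟨_, hq2⟩ := Finset.mem_filter.mp hq
      ext
      · rw [hp2, hq2]
      · exact congrArg Fin.val hpq
    · intro b hb
      refine ⟨(i, b), ?_, rfl⟩
      simp only [Finset.mem_filter, Finset.mem_univ, true_and] at hb
      simp only [hT, Finset.mem_filter, Finset.mem_product]
      exact ⟨⟨⟨Finset.mem_range.mpr hi_range, Finset.mem_univ b⟩, hb⟩, by simp⟩
  set W : Finset (ℕ × Fin n) :=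
    ((Finset.Icc t (t + j)) ×ˢ Finset.univ).filter (fun p => p ∈ E) with hW
  have hWset : ({p ∈ E | t ≤ p.1 ∧ p.1 ≤ t + j} : Set (ℕ × Fin n)) = ↑W := by
    ext p
    simp [hW, Finset.mem_filter, Finset.mem_product, Finset.mem_Icc, and_comm]
  have hTW : T.card ≤ W.card := by
    apply Finset.card_le_card_of_injOn (fun p => (p.1 + t, p.2))
    · intro p hp
      obtain ⟨hp1, hp2⟩ := Finset.mem_filter.mp hp
      obtain ⟨hp3, _⟩ := Finset.mem_product.mp hp1
      have hrange := Finset.mem_range.mp hp3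
      have hmem : (p.1 + t, p.2) ∈ E := by
        apply hdE
        rw [← hshift]
        exact hp2
      simp only [hW, Finset.mem_filter, Finset.mem_product, Finset.mem_Icc]
      exact Finset.mem_filter.mpr ⟨Finset.mem_product.mpr ⟨Finset.mem_Icc.mpr ⟨by omega, by omega⟩, Finset.mem_univ _⟩, hmem⟩
    · intro p _ q _ hpq
      simp only [Prod.mk.injEq] at hpq
      exact Prod.ext (by omega) hpq.2
  have hWle : W.card ≤ colDist C j - 1 := by
    have := hE t
    rwa [hWset, Set.ncard_coe_finset] at this
  -- contradiction
  have hsum : colDist C j ≤ colDist C j - 1 := by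
    calc colDist C j ≤ ∑ i ∈ Finset.range (j + 1), coeffWt d' i := hcd
    _ = T.card := hTcard.symm
    _ ≤ W.card := hTW
    _ ≤ colDist C j - 1 := hWle
  have hpos : 0 < colDist C j := by
    by_contra h
    push_neg at h
    interval_cases h' : colDist C j
    · -- colDist = 0, so the sum = 0, but coeffWt d' 0 ≥ 1
      have h0 : ∑ i ∈ Finset.range (j + 1), coeffWt d' i = 0 := by omega
      obtain ⟨b, hb⟩ := hd'0
      have : coeffWt d' 0 ≠ 0 := by
        unfold coeffWt
        simp only [ne_eq, Finset.card_eq_zero, ← Finset.nonempty_iff_ne_empty]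
        exact Finset.filter_nonempty_iff.mpr ⟨b, Finset.mem_univ b, hb⟩
      have : coeffWt d' 0 ≤ ∑ i ∈ Finset.range (j + 1), coeffWt d' i :=
        Finset.single_le_sum (fun i _ => Nat.zero_le _) (Finset.mem_range.mpr (by omega))
      omega
  omega
end

section
/- Suppose n − k = k and ν = μ. Indices 1 ≤ ℓ_1 < ⋯ < ℓ_{k(j+1+2μ)} ≤ n(j+1+μ) satisfy ℓ_{sk} ≤ sn and ℓ_{(μ+s)k+1} > sn for all s ∈ {1,…,j+μ} if and only if the complementary indices {i_1,…,i_{(n-k)(j+1)}} = {1,…,n(j+1+μ)} \ {ℓ_1,…,ℓ_{k(j+1+2μ)}} (listed increasingly) satisfy i_{(n-k)s+1} > sn and i_{(n-k)s} ≤ n(s+ν) for all s ∈ {1,…,j}. -/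
open Finset in
/-- For a strictly monotone `L`, `L a < t` iff `a` is below the number of
values of `L` that are below `t`. -/
private lemma strictMono_lt_iff_lt_count {m N : ℕ} (L : Fin m → Fin N)
    (hL : StrictMono L) (a : Fin m) (t : ℕ) :
    (L a).val < t ↔ a.val < (Finset.univ.filter fun b => (L b).val < t).card := by
  constructor
  · intro h
    have hsub : Finset.Iic a ⊆ Finset.univ.filter fun b => (L b).val < t := by
      intro b hb
      simp only [Finset.mem_Iic] at hb
      simp only [Finset.mem_filter, Finset.mem_univ, true_and]
      have : L b ≤ L a := hL.monotone hb
      exact lt_of_le_of_lt this h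
    have hcard := Finset.card_le_card hsub
    rw [Fin.card_Iic] at hcard
    omega
  · intro h
    by_contra hc
    push_neg at hc
    have hsub : (Finset.univ.filter fun b => (L b).val < t) ⊆ Finset.Iio a := by
      intro b hb
      simp only [Finset.mem_filter, Finset.mem_univ, true_and] at hb
      simp only [Finset.mem_Iio]
      by_contra hba
      push_neg at hba
      have : L a ≤ L b := hL.monotone hba
      have : (L a).val ≤ (L b).val := this
      omega
    have hcard := Finset.card_le_card hsub
    rw [Fin.card_Iio] at hcard
    omega

private lemma count_add_count_compl {m₁ m₂ N : ℕ}
    (L : Fin m₁ → Fin N) (I : Fin m₂ → Fin N)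
    (hL : Function.Injective L) (hI : Function.Injective I)
    (hcomp : (Set.range L)ᶜ = Set.range I) (t : ℕ) (ht : t ≤ N) :
    (Finset.univ.filter fun b => (L b).val < t).card
      + (Finset.univ.filter fun b => (I b).val < t).card = t := by
  classical
  have key : ∀ {m : ℕ} (f : Fin m → Fin N), Function.Injective f →
      (Finset.univ.filter fun b => (f b).val < t).card
        = ((Finset.univ.filter fun x : Fin N => x.val < t).filter
            fun x => x ∈ Set.range f).card := by
    intro m f hf
    apply Finset.card_bij (fun b _ => f b)
    · intro b hb
      simp only [Finset.mem_filter, Finset.mem_univ, true_and] at hb ⊢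
      exact ⟨hb, ⟨b, rfl⟩⟩
    · intro b₁ _ b₂ _ h
      exact hf h
    · intro x hx
      simp only [Finset.mem_filter, Finset.mem_univ, true_and] at hx
      obtain ⟨hxt, b, rfl⟩ := hx
      exact ⟨b, by simp [hxt], rfl⟩
  rw [key L hL, key I hI]
  have hneg : ((Finset.univ.filter fun x : Fin N => x.val < t).filter
      fun x => x ∈ Set.range I)
      = ((Finset.univ.filter fun x : Fin N => x.val < t).filter
      fun x => ¬ x ∈ Set.range L) := by
    apply Finset.filter_congr
    intro x _
    have : x ∈ Set.range I ↔ x ∈ (Set.range L)ᶜ := by rw [hcomp]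
    simp only [Set.mem_compl_iff] at this
    simp [this]
  rw [hneg, Finset.card_filter_add_card_filter_not, ← Finset.card_range t]
  apply Finset.card_bij (fun (x : Fin N) _ => x.val)
  · intro x hx
    simp only [Finset.mem_filter, Finset.mem_univ, true_and] at hx
    simpa using hx
  · intro x₁ _ x₂ _ h
    exact Fin.val_injective h
  · intro y hy
    have hyt : y < t := Finset.mem_range.mp hy
    exact ⟨⟨y, lt_of_lt_of_le hyt ht⟩, by simp [hyt], rfl⟩

/-- For `n = 2k` and `ν = μ`, indices `ℓ_1 < ⋯ < ℓ_{k(j+1+2μ)}` in `{1,…,n(j+1+μ)}`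
satisfy the generator non-triviality conditions (`ℓ_{sk} ≤ sn`, `ℓ_{(μ+s)k+1} > sn`
for `s = 1,…,j+μ`) iff the complementary indices `i_1 < ⋯ < i_{(n-k)(j+1)}` satisfy
the parity-check non-triviality conditions (`i_{(n-k)s+1} > sn`, `i_{(n-k)s} ≤ n(s+ν)`
for `s = 1,…,j`). -/
theorem generator_indices_iff_complement_parityCheck_indices
    {n k j μ ν : ℕ} (hk : 0 < k) (hn : n = 2 * k) (hνμ : ν = μ)
    (L : Fin (k * (j + 1 + 2 * μ)) → Fin (n * (j + 1 + μ))) (hL : StrictMono L)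
    (I : Fin ((n - k) * (j + 1)) → Fin (n * (j + 1 + μ))) (hI : StrictMono I)
    (hcomp : (Set.range L)ᶜ = Set.range I) :
    (∀ s : ℕ, 1 ≤ s → s ≤ j + μ →
        ∀ (a b : Fin (k * (j + 1 + 2 * μ))),
          a.val + 1 = s * k → b.val = (μ + s) * k →
            (L a).val < s * n ∧ s * n ≤ (L b).val) ↔
      (∀ s : ℕ, 1 ≤ s → s ≤ j →
        ∀ (a b : Fin ((n - k) * (j + 1))),
          a.val = (n - k) * s → b.val + 1 = (n - k) * s →
            s * n ≤ (I a).val ∧ (I b).val < n * (s + ν)) := by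
  classical
  rw [hνμ]
  have hnk : n - k = k := by omega
  set F : ℕ → ℕ := fun t => (Finset.univ.filter fun b => (L b).val < t).card with hF
  set G : ℕ → ℕ := fun t => (Finset.univ.filter fun b => (I b).val < t).card with hG
  have hiffL : ∀ (a : Fin (k * (j + 1 + 2 * μ))) (t : ℕ),
      (L a).val < t ↔ a.val < F t := fun a t => strictMono_lt_iff_lt_count L hL a t
  have hiffI : ∀ (a : Fin ((n - k) * (j + 1))) (t : ℕ),
      (I a).val < t ↔ a.val < G t := fun a t => strictMono_lt_iff_lt_count I hI a t
  have hsum : ∀ t : ℕ, t ≤ n * (j + 1 + μ) → F t + G t = t := fun t ht =>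
    count_add_count_compl L I hL.injective hI.injective hcomp t ht
  have hGle : ∀ t : ℕ, G t ≤ (n - k) * (j + 1) := by
    intro t
    calc G t ≤ Finset.univ.card := Finset.card_filter_le _ _
      _ = (n - k) * (j + 1) := by simp
  -- LHS reformulation
  have hLiff : (∀ s : ℕ, 1 ≤ s → s ≤ j + μ →
        ∀ (a b : Fin (k * (j + 1 + 2 * μ))),
          a.val + 1 = s * k → b.val = (μ + s) * k →
            (L a).val < s * n ∧ s * n ≤ (L b).val) ↔
      (∀ s : ℕ, 1 ≤ s → s ≤ j + μ →
        s * k ≤ F (s * n) ∧ F (s * n) ≤ (μ + s) * k) := by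
    constructor
    · intro h s hs1 hs2
      have hsk : 1 ≤ s * k := Nat.mul_pos hs1 hk
      have hska : s * k - 1 < k * (j + 1 + 2 * μ) := by
        have h1 : s * k ≤ (j + μ) * k := Nat.mul_le_mul_right k hs2
        have h2 : k * (j + 1 + 2 * μ) = (j + μ) * k + k + μ * k := by ring
        omega
      have hskb : (μ + s) * k < k * (j + 1 + 2 * μ) := by
        have h1 : (μ + s) * k ≤ (μ + (j + μ)) * k := Nat.mul_le_mul_right k (by omega)
        have h2 : k * (j + 1 + 2 * μ) = (μ + (j + μ)) * k + k := by ring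
        omega
      obtain ⟨h1, h2⟩ := h s hs1 hs2 ⟨s * k - 1, hska⟩ ⟨(μ + s) * k, hskb⟩
        (by simp; omega) rfl
      rw [hiffL] at h1
      have h2' : ¬ (L ⟨(μ + s) * k, hskb⟩).val < s * n := by omega
      rw [hiffL] at h2'
      simp only [not_lt] at h2'
      simp only at h1 h2'
      omega
    · intro h s hs1 hs2 a b ha hb
      obtain ⟨h1, h2⟩ := h s hs1 hs2
      constructor
      · rw [hiffL]; omega
      · have : ¬ (L b).val < s * n := by rw [hiffL]; omega
        omega
  -- RHS reformulation
  have hIiff : (∀ s : ℕ, 1 ≤ s → s ≤ j →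
        ∀ (a b : Fin ((n - k) * (j + 1))),
          a.val = (n - k) * s → b.val + 1 = (n - k) * s →
            s * n ≤ (I a).val ∧ (I b).val < n * (s + μ)) ↔
      (∀ s : ℕ, 1 ≤ s → s ≤ j →
        G (s * n) ≤ (n - k) * s ∧ (n - k) * s ≤ G (n * (s + μ))) := by
    constructor
    · intro h s hs1 hs2
      have hnks : 1 ≤ (n - k) * s := Nat.mul_pos (by omega) hs1
      have hb1 : (n - k) * s < (n - k) * (j + 1) := by
        have hm := Nat.mul_le_mul_left (n - k) hs2
        have hr : (n - k) * (j + 1) = (n - k) * j + (n - k) := by ring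
        omega
      have hb2 : (n - k) * s - 1 < (n - k) * (j + 1) := by omega
      obtain ⟨h1, h2⟩ := h s hs1 hs2 ⟨(n - k) * s, hb1⟩ ⟨(n - k) * s - 1, hb2⟩
        rfl (by simp; omega)
      have h1' : ¬ (I ⟨(n - k) * s, hb1⟩).val < s * n := by omega
      rw [hiffI] at h1'
      simp only [not_lt] at h1'
      rw [hiffI] at h2
      simp only at h1' h2
      omega
    · intro h s hs1 hs2 a b ha hb
      obtain ⟨h1, h2⟩ := h s hs1 hs2
      constructor
      · have : ¬ (I a).val < s * n := by rw [hiffI]; omega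
        omega
      · rw [hiffI]; omega
  rw [hLiff, hIiff]
  -- now the purely arithmetic equivalence
  constructor
  · intro h s hs1 hs2
    obtain ⟨h1, h2⟩ := h s hs1 (by omega)
    obtain ⟨h3, h4⟩ := h (s + μ) (by omega) (by omega)
    have e1 : F (s * n) + G (s * n) = s * n := by
      apply hsum
      calc s * n ≤ (j + 1 + μ) * n := Nat.mul_le_mul_right n (by omega)
        _ = n * (j + 1 + μ) := Nat.mul_comm _ _
    have e2 : F (n * (s + μ)) + G (n * (s + μ)) = n * (s + μ) := by
      apply hsum
      exact Nat.mul_le_mul_left n (by omega)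
    have r1 : s * n = s * k + s * k := by rw [hn]; ring
    have r2 : (n - k) * s = s * k := by rw [hnk]; ring
    have r3 : n * (s + μ) = (s + μ) * k + (s + μ) * k := by rw [hn]; ring
    have r4 : (μ + (s + μ)) * k = (s + μ) * k + μ * k := by ring
    have r5 : (s + μ) * k = s * k + μ * k := by ring
    -- F ((s+μ) * n) vs F (n * (s+μ)) : match the argument
    have r6 : (s + μ) * n = n * (s + μ) := Nat.mul_comm _ _
    rw [r6] at h3 h4
    omega
  · intro h s hs1 hs2
    have htle : s * n ≤ n * (j + 1 + μ) := by
      calc s * n ≤ (j + 1 + μ) * n := Nat.mul_le_mul_right n (by omega)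
        _ = n * (j + 1 + μ) := Nat.mul_comm _ _
    have e1 : F (s * n) + G (s * n) = s * n := hsum _ htle
    have r1 : s * n = s * k + s * k := by rw [hn]; ring
    constructor
    · -- s * k ≤ F (s * n)
      by_cases hsj : s ≤ j
      · obtain ⟨h1, h2⟩ := h s hs1 hsj
        have r2 : (n - k) * s = s * k := by rw [hnk]; ring
        omega
      · -- s ≥ j + 1 : use the global count bound
        have hg := hGle (s * n)
        have r2 : (n - k) * (j + 1) = (j + 1) * k := by rw [hnk]; ring
        have r3 : (j + 1) * k ≤ s * k := Nat.mul_le_mul_right k (by omega)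
        omega
    · -- F (s * n) ≤ (μ + s) * k
      by_cases hsμ : μ < s
      · obtain ⟨s', rfl⟩ : ∃ s', s = s' + μ := ⟨s - μ, by omega⟩
        obtain ⟨h1, h2⟩ := h s' (by omega) (by omega)
        have e2 : F (n * (s' + μ)) + G (n * (s' + μ)) = n * (s' + μ) := by
          apply hsum
          exact Nat.mul_le_mul_left n (by omega)
        have r2 : (n - k) * s' = s' * k := by rw [hnk]; ring
        have r3 : n * (s' + μ) = (s' + μ) * n := Nat.mul_comm _ _
        rw [r3] at e2 h2
        have r4 : (s' + μ) * n = (s' + μ) * k + (s' + μ) * k := by rw [hn]; ring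
        have r5 : (s' + μ) * k = s' * k + μ * k := by ring
        have r6 : (μ + (s' + μ)) * k = s' * k + μ * k + μ * k := by ring
        omega
      · -- s ≤ μ : trivial bound F t ≤ t
        have r2 : (μ + s) * k = μ * k + s * k := by ring
        have r3 : s * k ≤ μ * k := Nat.mul_le_mul_right k (by omega)
        omega
end

section
/- Every complete MDP convolutional code with k ∣ δ (defined via the generator matrix: all non-trivial full-size minors of 𝒢_{μ+L}^c are nonzero, where μ = δ/k and L = ⌊δ/k⌋ + ⌊δ/(n-k)⌋) and with k ≤ n−k is MDP, i.e., all non-trivial full-size minors of the sliding generator matrix G_L^c are nonzero (equivalently d_L^c = (n-k)(L+1)+1). -/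
open Polynomial Matrix
open scoped Classical

/-- The big block Toeplitz matrix `𝒢_{μ+j}^c` built from `G_0, …, G_μ`. -/
def bigG {F : Type*} [Field F] (k n : ℕ) (hk : 0 < k) (hn : 0 < n) (μ j : ℕ)
    (G : ℕ → Matrix (Fin k) (Fin n) F) :
    Matrix (Fin ((j + 1 + 2 * μ) * k)) (Fin ((j + 1 + μ) * n)) F :=
  fun r c =>
    if c.val / n ≤ r.val / k ∧ r.val / k ≤ μ + c.val / n then
      G (μ + c.val / n - r.val / k) ⟨r.val % k, Nat.mod_lt _ hk⟩ ⟨c.val % n, Nat.mod_lt _ hn⟩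
    else 0

/-- The sliding generator matrix `G_j^c ∈ F^{(j+1)k × (j+1)n}` with block `(s,t)`
equal to `G_{t-s}` for `t ≥ s` and `0` otherwise. -/
def slidG {F : Type*} [Field F] (k n : ℕ) (hk : 0 < k) (hn : 0 < n) (j : ℕ)
    (G : ℕ → Matrix (Fin k) (Fin n) F) :
    Matrix (Fin ((j + 1) * k)) (Fin ((j + 1) * n)) F :=
  fun r c =>
    if r.val / k ≤ c.val / n then
      G (c.val / n - r.val / k) ⟨r.val % k, Nat.mod_lt _ hk⟩ ⟨c.val % n, Nat.mod_lt _ hn⟩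
    else 0

private lemma fin_strictMono_add {N M : ℕ} {f : Fin N → Fin M} (hf : StrictMono f) :
    ∀ d : ℕ, ∀ i j : Fin N, i.val + d = j.val → (f i).val + d ≤ (f j).val := by
  intro d
  induction d with
  | zero =>
    intro i j h
    have hij : i = j := Fin.ext (by omega)
    subst hij; omega
  | succ d ih =>
    intro i j h
    have hm : i.val + d < N := by have := j.isLt; omega
    have h1 := ih i ⟨i.val + d, hm⟩ rfl
    have h2 : (⟨i.val + d, hm⟩ : Fin N) < j := by
      rw [Fin.lt_def]
      show i.val + d < j.val
      omega
    have h3 : (f ⟨i.val + d, hm⟩).val < (f j).val := hf h2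
    omega

/-- The column selection embedding a sliding-matrix column choice `t` into the big matrix:
the first `2μk` columns are packed two `k`-groups per `n`-block, then `t` shifted by `μ` blocks. -/
private def embedCols {k n μ L : ℕ} (hk : 0 < k) (hn : 0 < n) (h2k : 2 * k ≤ n)
    (t : Fin ((L + 1) * k) → Fin ((L + 1) * n)) (a : Fin ((L + 1 + 2 * μ) * k)) :
    Fin ((L + 1 + μ) * n) :=
  if h : a.val < 2 * μ * k then
    ⟨a.val / (2 * k) * n + a.val % (2 * k), by
      have h1 : a.val % (2 * k) < 2 * k := Nat.mod_lt _ (by omega)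
      have h2 : a.val / (2 * k) < μ := by
        apply (Nat.div_lt_iff_lt_mul (by omega)).2
        have e : μ * (2 * k) = 2 * μ * k := by ring
        omega
      have h3 : (a.val / (2 * k) + 1) * n ≤ (L + 1 + μ) * n := Nat.mul_le_mul_right _ (by omega)
      have h4 : (a.val / (2 * k) + 1) * n = a.val / (2 * k) * n + n := by ring
      omega⟩
  else
    have hjlt : a.val - 2 * μ * k < (L + 1) * k := by
      have h1 := a.isLt
      have h0 : 0 < (L + 1) * k := Nat.mul_pos (by omega) hk
      have e : (L + 1 + 2 * μ) * k = (L + 1) * k + 2 * μ * k := by ring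
      omega
    ⟨μ * n + (t ⟨a.val - 2 * μ * k, hjlt⟩).val, by
      have h1 := (t ⟨a.val - 2 * μ * k, hjlt⟩).isLt
      have e : μ * n + (L + 1) * n = (L + 1 + μ) * n := by ring
      omega⟩

private lemma embedCols_val_lt {k n μ L : ℕ} (hk : 0 < k) (hn : 0 < n) (h2k : 2 * k ≤ n)
    (t : Fin ((L + 1) * k) → Fin ((L + 1) * n)) (a : Fin ((L + 1 + 2 * μ) * k))
    (h : a.val < 2 * μ * k) :
    (embedCols hk hn h2k t a).val = a.val / (2 * k) * n + a.val % (2 * k) := by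
  simp only [embedCols]
  rw [dif_pos h]

private lemma embedCols_val_ge {k n μ L : ℕ} (hk : 0 < k) (hn : 0 < n) (h2k : 2 * k ≤ n)
    (t : Fin ((L + 1) * k) → Fin ((L + 1) * n)) (a : Fin ((L + 1 + 2 * μ) * k))
    (h : ¬ a.val < 2 * μ * k) (j : Fin ((L + 1) * k)) (hj : j.val = a.val - 2 * μ * k) :
    (embedCols hk hn h2k t a).val = μ * n + (t j).val := by
  obtain ⟨jv, hlt⟩ := j
  simp only at hj
  subst hj
  simp only [embedCols]
  rw [dif_neg h]

/-- Every complete MDP convolutional code (defined via the generator matrix, with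
`k ∣ δ`, `μ = δ/k`, `L = ⌊δ/k⌋ + ⌊δ/(n-k)⌋`) with `k ≤ n - k` is MDP: all
non-trivial full-size minors of the sliding generator matrix `G_L^c` are nonzero. -/
theorem completeMDP_is_MDP {F : Type*} [Field F] [Fintype F]
    {k n δ μ L : ℕ} (hk : 0 < k) (hn : 0 < n) (hkn : k < n) (hknk : k ≤ n - k)
    (hkδ : k ∣ δ) (hμ : μ = δ / k) (hL : L = δ / k + δ / (n - k))
    (G : ℕ → Matrix (Fin k) (Fin n) F)
    (hGhigh : ∀ i : ℕ, μ < i → G i = 0)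
    (hcomplete : ∀ (ℓ : Fin ((L + 1 + 2 * μ) * k) → Fin ((L + 1 + μ) * n)),
        StrictMono ℓ →
        (∀ s : ℕ, 1 ≤ s → s ≤ L + μ →
          ∀ (a b : Fin ((L + 1 + 2 * μ) * k)),
            a.val + 1 = s * k → b.val = (μ + s) * k →
              (ℓ a).val < s * n ∧ s * n ≤ (ℓ b).val) →
        ((bigG k n hk hn μ L G).submatrix id ℓ).det ≠ 0) :
    ∀ (t : Fin ((L + 1) * k) → Fin ((L + 1) * n)), StrictMono t →
      (∀ s : ℕ, 1 ≤ s → s ≤ L →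
        ∀ a : Fin ((L + 1) * k), a.val = s * k → s * n ≤ (t a).val) →
      ((slidG k n hk hn L G).submatrix id t).det ≠ 0 := by
  intro t ht htriv
  have h2k : 2 * k ≤ n := by omega
  have hk2 : 0 < 2 * k := by omega
  have hδ : δ = μ * k := by rw [hμ, Nat.div_mul_cancel hkδ]
  have hLμeq : L = μ + δ / (n - k) := by rw [hL, hμ]
  have hLμ : μ ≤ L := by
    have h0 : 0 ≤ δ / (n - k) := Nat.zero_le _
    omega
  have hdb : (L - μ) * (n - k) ≤ δ := by
    rw [hLμeq, Nat.add_sub_cancel_left]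
    exact Nat.div_mul_le_self _ _
  set ℓfun : Fin ((L + 1 + 2 * μ) * k) → Fin ((L + 1 + μ) * n) :=
    embedCols hk hn h2k t with hℓfun
  -- bound for the early columns
  have hcolbound : ∀ m : ℕ, m < 2 * μ * k → m / (2 * k) * n + m % (2 * k) < μ * n := by
    intro m hm
    have h1 : m % (2 * k) < 2 * k := Nat.mod_lt _ hk2
    have h2 : m / (2 * k) < μ := by
      apply (Nat.div_lt_iff_lt_mul hk2).2
      have e : μ * (2 * k) = 2 * μ * k := by ring
      omega
    have h3 : (m / (2 * k) + 1) * n ≤ μ * n := Nat.mul_le_mul_right _ (by omega)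
    have h4 : (m / (2 * k) + 1) * n = m / (2 * k) * n + n := by ring
    omega
  have hdim : ∀ a : Fin ((L + 1 + 2 * μ) * k), a.val - 2 * μ * k < (L + 1) * k := by
    intro a
    have h1 := a.isLt
    have h0 : 0 < (L + 1) * k := Nat.mul_pos (by omega) hk
    have e : (L + 1 + 2 * μ) * k = (L + 1) * k + 2 * μ * k := by ring
    omega
  -- strict monotonicity of the column selection
  have hℓmono : StrictMono ℓfun := by
    intro a b hab
    rw [Fin.lt_def]
    have hab' : a.val < b.val := hab
    by_cases h1 : a.val < 2 * μ * k
    · by_cases h2 : b.val < 2 * μ * k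
      · rw [embedCols_val_lt hk hn h2k t a h1, embedCols_val_lt hk hn h2k t b h2]
        have hqa : a.val / (2 * k) ≤ b.val / (2 * k) := Nat.div_le_div_right hab'.le
        rcases eq_or_lt_of_le hqa with heq | hlt
        · rw [heq]
          have hma := Nat.div_add_mod a.val (2 * k)
          have hmb := Nat.div_add_mod b.val (2 * k)
          have h3 : 2 * k * (a.val / (2 * k)) = 2 * k * (b.val / (2 * k)) := by rw [heq]
          omega
        · have h3 : a.val % (2 * k) < 2 * k := Nat.mod_lt _ hk2
          have h4 : (a.val / (2 * k) + 1) * n ≤ b.val / (2 * k) * n :=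
            Nat.mul_le_mul_right _ (by omega)
          have h5 : (a.val / (2 * k) + 1) * n = a.val / (2 * k) * n + n := by ring
          omega
      · rw [embedCols_val_lt hk hn h2k t a h1,
          embedCols_val_ge hk hn h2k t b h2 ⟨b.val - 2 * μ * k, hdim b⟩ rfl]
        have h3 := hcolbound a.val h1
        omega
    · have h2 : ¬ b.val < 2 * μ * k := by omega
      rw [embedCols_val_ge hk hn h2k t a h1 ⟨a.val - 2 * μ * k, hdim a⟩ rfl,
        embedCols_val_ge hk hn h2k t b h2 ⟨b.val - 2 * μ * k, hdim b⟩ rfl]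
      have h3 : (⟨a.val - 2 * μ * k, hdim a⟩ : Fin ((L + 1) * k)) <
          ⟨b.val - 2 * μ * k, hdim b⟩ := by
        rw [Fin.lt_def]
        show a.val - 2 * μ * k < b.val - 2 * μ * k
        omega
      have h4 : (t ⟨a.val - 2 * μ * k, hdim a⟩).val < (t ⟨b.val - 2 * μ * k, hdim b⟩).val :=
        ht h3
      omega
  -- the non-triviality conditions for the big matrix
  have hcond : ∀ s : ℕ, 1 ≤ s → s ≤ L + μ →
      ∀ (a b : Fin ((L + 1 + 2 * μ) * k)),
        a.val + 1 = s * k → b.val = (μ + s) * k →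
          (ℓfun a).val < s * n ∧ s * n ≤ (ℓfun b).val := by
    intro s hs1 hs2 a b ha hb
    constructor
    · by_cases hcase : s ≤ 2 * μ
      · have haval : a.val < 2 * μ * k := by
          have h1 : s * k ≤ 2 * μ * k := Nat.mul_le_mul_right _ hcase
          omega
        rw [embedCols_val_lt hk hn h2k t a haval]
        have h1 : a.val / (2 * k) < s := by
          apply (Nat.div_lt_iff_lt_mul hk2).2
          have e : s * (2 * k) = 2 * (s * k) := by ring
          omega
        have h2 : (a.val / (2 * k) + 1) * n ≤ s * n := Nat.mul_le_mul_right _ (by omega)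
        have h3 : (a.val / (2 * k) + 1) * n = a.val / (2 * k) * n + n := by ring
        have h4 : a.val % (2 * k) < 2 * k := Nat.mod_lt _ hk2
        omega
      · obtain ⟨s', rfl⟩ : ∃ s', s = s' + 2 * μ := ⟨s - 2 * μ, by omega⟩
        have hs'1 : 1 ≤ s' := by omega
        have haval : ¬ a.val < 2 * μ * k := by
          have h1 : (2 * μ + 1) * k ≤ (s' + 2 * μ) * k := Nat.mul_le_mul_right _ (by omega)
          have h2 : (2 * μ + 1) * k = 2 * μ * k + k := by ring
          omega
        rw [embedCols_val_ge hk hn h2k t a haval ⟨a.val - 2 * μ * k, hdim a⟩ rfl]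
        obtain ⟨d, hd⟩ : ∃ d, L + 1 = s' + μ + d := ⟨L + 1 - s' - μ, by omega⟩
        have hd1 : 1 ≤ d := by omega
        have hdLμ : d ≤ L - μ := by omega
        have h0 : 0 < (L + 1) * k := Nat.mul_pos (by omega) hk
        have hlastlt : (L + 1) * k - 1 < (L + 1) * k := by omega
        have hkey := fin_strictMono_add ht ((L + 1) * k - 1 - (a.val - 2 * μ * k))
          ⟨a.val - 2 * μ * k, hdim a⟩ ⟨(L + 1) * k - 1, hlastlt⟩ (by
            show a.val - 2 * μ * k + ((L + 1) * k - 1 - (a.val - 2 * μ * k)) = (L + 1) * k - 1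
            have := hdim a
            omega)
        have hlastb := (t ⟨(L + 1) * k - 1, hlastlt⟩).isLt
        have e0 : 2 * μ * k = 2 * (μ * k) := by ring
        have e1 : (s' + 2 * μ) * k = s' * k + 2 * (μ * k) := by ring
        have e2 : (L + 1) * k = s' * k + μ * k + d * k := by rw [hd]; ring
        have e3 : (L + 1) * n = s' * n + μ * n + d * n := by rw [hd]; ring
        have e4 : (s' + 2 * μ) * n = s' * n + 2 * (μ * n) := by ring
        have e5 : d * n = d * (n - k) + d * k := by
          rw [← Nat.mul_add]; congr 1; omega
        have e6 : d * (n - k) ≤ (L - μ) * (n - k) := Nat.mul_le_mul_right _ hdLμ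
        have h1 : 1 ≤ s' * k := Nat.mul_pos (by omega) hk
        omega
    · by_cases hcase : s < μ
      · have hbval : b.val < 2 * μ * k := by
          have h1 : (μ + s + 1) * k ≤ 2 * μ * k := Nat.mul_le_mul_right _ (by omega)
          have h2 : (μ + s + 1) * k = (μ + s) * k + k := by ring
          omega
        rw [embedCols_val_lt hk hn h2k t b hbval]
        have h1 : b.val / (2 * k) = (μ + s) / 2 := by
          rw [hb]; exact Nat.mul_div_mul_right _ _ hk
        rw [h1]
        have h2 : s ≤ (μ + s) / 2 := by
          rw [Nat.le_div_iff_mul_le (by omega)]; omega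
        have h3 : s * n ≤ (μ + s) / 2 * n := Nat.mul_le_mul_right _ h2
        omega
      · have hbval : ¬ b.val < 2 * μ * k := by
          have h1 : 2 * μ * k ≤ (μ + s) * k := Nat.mul_le_mul_right _ (by omega)
          omega
        rw [embedCols_val_ge hk hn h2k t b hbval ⟨b.val - 2 * μ * k, hdim b⟩ rfl]
        by_cases hs0 : s = μ
        · subst hs0; omega
        · have h1 : (s - μ) * k + 2 * μ * k = (μ + s) * k := by
            rw [← Nat.add_mul]; congr 1; omega
          have hjval : (⟨b.val - 2 * μ * k, hdim b⟩ : Fin ((L + 1) * k)).val = (s - μ) * k := by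
            show b.val - 2 * μ * k = (s - μ) * k
            omega
          have h2 := htriv (s - μ) (by omega) (by omega) ⟨b.val - 2 * μ * k, hdim b⟩ hjval
          have h3 : (s - μ) * n + μ * n = s * n := by
            rw [← Nat.add_mul]; congr 1; omega
          omega
  have hbig := hcomplete ℓfun hℓmono hcond
  -- reindex the big minor as a 2×2 block matrix
  have hsplit : 2 * μ * k + (L + 1) * k = (L + 1 + 2 * μ) * k := by ring
  set ρ : Fin (2 * μ * k) ⊕ Fin ((L + 1) * k) ≃ Fin ((L + 1 + 2 * μ) * k) :=
    finSumFinEquiv.trans (finCongr hsplit) with hρ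
  set M := (bigG k n hk hn μ L G).submatrix id ℓfun with hM
  have hρl : ∀ m : Fin (2 * μ * k), (ρ (Sum.inl m)).val = m.val := by
    intro m; simp [hρ, finSumFinEquiv]
  have hρr : ∀ i : Fin ((L + 1) * k), (ρ (Sum.inr i)).val = 2 * μ * k + i.val := by
    intro i; simp [hρ, finSumFinEquiv]
  have h21 : (M.submatrix ρ ρ).toBlocks₂₁ = 0 := by
    ext i m
    simp only [Matrix.toBlocks₂₁, Matrix.submatrix_apply, Matrix.of_apply, id_eq,
      Matrix.zero_apply, hM]
    have hmval : (ρ (Sum.inl m)).val < 2 * μ * k := by rw [hρl]; exact m.isLt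
    have hcval := embedCols_val_lt hk hn h2k t (ρ (Sum.inl m)) hmval
    rw [hρl] at hcval
    have hmq : m.val / (2 * k) < μ := by
      apply (Nat.div_lt_iff_lt_mul hk2).2
      have e : μ * (2 * k) = 2 * μ * k := by ring
      have := m.isLt
      omega
    have hmr : m.val % (2 * k) < n := lt_of_lt_of_le (Nat.mod_lt _ hk2) h2k
    have hcd : (ℓfun (ρ (Sum.inl m))).val / n = m.val / (2 * k) := by
      rw [hcval, show m.val / (2 * k) * n + m.val % (2 * k) =
        m.val % (2 * k) + n * (m.val / (2 * k)) by ring,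
        Nat.add_mul_div_left _ _ hn, Nat.div_eq_of_lt hmr, Nat.zero_add]
    have hrd : (ρ (Sum.inr i)).val / k = i.val / k + 2 * μ := by
      rw [hρr, show 2 * μ * k + i.val = i.val + k * (2 * μ) by ring,
        Nat.add_mul_div_left _ _ hk]
    simp only [bigG]
    rw [if_neg]
    rw [hcd, hrd]
    have h8 : 0 ≤ i.val / k := Nat.zero_le _
    have h9 : 0 ≤ m.val / (2 * k) := Nat.zero_le _
    have h10 : 0 ≤ (ℓfun (ρ (Sum.inl m))).val / n := Nat.zero_le _
    omega
  have h22 : (M.submatrix ρ ρ).toBlocks₂₂ = (slidG k n hk hn L G).submatrix id t := by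
    ext i j
    simp only [Matrix.toBlocks₂₂, Matrix.submatrix_apply, Matrix.of_apply, id_eq, hM]
    have h2 : ¬ (ρ (Sum.inr j)).val < 2 * μ * k := by rw [hρr]; omega
    have hcval := embedCols_val_ge hk hn h2k t (ρ (Sum.inr j)) h2 j (by rw [hρr]; omega)
    have hcd : (ℓfun (ρ (Sum.inr j))).val / n = (t j).val / n + μ := by
      rw [hcval, show μ * n + (t j).val = (t j).val + n * μ by ring,
        Nat.add_mul_div_left _ _ hn]
    have hcm : (ℓfun (ρ (Sum.inr j))).val % n = (t j).val % n := by
      rw [hcval, show μ * n + (t j).val = (t j).val + n * μ by ring,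
        Nat.add_mul_mod_self_left]
    have hrd : (ρ (Sum.inr i)).val / k = i.val / k + 2 * μ := by
      rw [hρr, show 2 * μ * k + i.val = i.val + k * (2 * μ) by ring,
        Nat.add_mul_div_left _ _ hk]
    have hrm : (ρ (Sum.inr i)).val % k = i.val % k := by
      rw [hρr, show 2 * μ * k + i.val = i.val + k * (2 * μ) by ring,
        Nat.add_mul_mod_self_left]
    simp only [bigG, slidG]
    split_ifs with hA hB hB
    · -- both conditions hold
      have ea : μ + (ℓfun (ρ (Sum.inr j))).val / n - (ρ (Sum.inr i)).val / k =
          (t j).val / n - i.val / k := by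
        rw [hcd, hrd]; omega
      rw [ea]
      congr 1
      · exact Fin.ext hrm
      · exact Fin.ext hcm
    · -- big cond holds but slid cond fails : impossible
      exfalso
      rw [hcd, hrd] at hA
      omega
    · -- slid cond holds but big cond fails : G index exceeds μ
      rw [hcd, hrd] at hA
      have hμlt : μ < (t j).val / n - i.val / k := by omega
      rw [hGhigh _ hμlt]
      simp
    · rfl
  have hdet0 : ((slidG k n hk hn L G).submatrix id t).det = 0 → M.det = 0 := by
    intro hzero
    rw [← Matrix.det_submatrix_equiv_self ρ M]
    conv_lhs => rw [← Matrix.fromBlocks_toBlocks (M.submatrix ρ ρ), h21, h22]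
    rw [Matrix.det_fromBlocks_zero₂₁, hzero, mul_zero]
  intro hzero
  exact hbig (hdet0 hzero)
end

section
/- Let α be a primitive element of F_{p^N} with N > k(L+1+2μ)·2^{(μ+1)n+k−2}, where μ = δ/k and L = ⌊δ/k⌋ + ⌊δ/(n-k)⌋. Define G_i ∈ F^{k×n} by (G_i)_{r,c} = α^{2^{in + (r-1) + (c-1)}} for i = 0,…,μ. Then all non-trivial full-size minors of the matrix 𝒢_{μ+L}^c built from G_0,…,G_μ are nonzero, i.e., G(z) = Σ G_i z^i generates an (n,k,δ) complete MDP convolutional code. -/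
open Polynomial Matrix
open scoped Classical

namespace CompleteMDPAux


lemma lt_succ_div_mul (j k : ℕ) (hk : 0 < k) : j < (j / k + 1) * k := by
  have h1 := Nat.div_add_mod j k
  have h2 := Nat.mod_lt j hk
  calc j = k * (j / k) + j % k := h1.symm
    _ < k * (j / k) + k := Nat.add_lt_add_left h2 _
    _ = (j / k + 1) * k := by ring

/-- Strict supermodularity of multiplication. -/
lemma mul_supermodular {A A' B B' : ℕ} (h1 : A < A') (h2 : B < B') :
    A * B' + A' * B < A * B + A' * B' := by
  obtain ⟨d, rfl⟩ := Nat.exists_eq_add_of_lt h1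
  obtain ⟨e, rfl⟩ := Nat.exists_eq_add_of_lt h2
  ring_nf
  nlinarith

lemma pow_supermodular {a a' b b' : ℕ} (h1 : a < a') (h2 : b < b') :
    2 ^ (a + b') + 2 ^ (a' + b) < 2 ^ (a + b) + 2 ^ (a' + b') := by
  have e1 : (2:ℕ) ^ a < 2 ^ a' := Nat.pow_lt_pow_right (by norm_num) h1
  have e2 : (2:ℕ) ^ b < 2 ^ b' := Nat.pow_lt_pow_right (by norm_num) h2
  simpa [pow_add] using mul_supermodular e1 e2

/-- Swapping two columns of a permutation lowers the weight `∑ l, F (σ l) l`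
if the local exchange inequality holds. -/
lemma sum_swap_lt {ι : Type*} [Fintype ι] [DecidableEq ι] (F : ι → ι → ℕ)
    (σ : Equiv.Perm ι) (j j' : ι) (hjj : j ≠ j')
    (hlt : F (σ j') j + F (σ j) j' < F (σ j) j + F (σ j') j') :
    ∑ l, F (((Equiv.swap j j').trans σ) l) l < ∑ l, F (σ l) l := by
  have hsplit : ∀ τ : Equiv.Perm ι, ∑ l, F (τ l) l
      = F (τ j) j + (F (τ j') j' + ∑ l ∈ (Finset.univ.erase j).erase j', F (τ l) l) := by
    intro τ
    rw [← Finset.add_sum_erase _ _ (Finset.mem_univ j),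
      ← Finset.add_sum_erase _ _ (Finset.mem_erase.2 ⟨Ne.symm hjj, Finset.mem_univ j'⟩)]
  rw [hsplit σ, hsplit ((Equiv.swap j j').trans σ)]
  have hrest : ∑ l ∈ (Finset.univ.erase j).erase j', F (((Equiv.swap j j').trans σ) l) l
      = ∑ l ∈ (Finset.univ.erase j).erase j', F (σ l) l := by
    apply Finset.sum_congr rfl
    intro l hl
    rw [Finset.mem_erase, Finset.mem_erase] at hl
    simp [Equiv.swap_apply_of_ne_of_ne hl.2.1 hl.1]
  rw [hrest]
  have h1 : ((Equiv.swap j j').trans σ) j = σ j' := by simp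
  have h2 : ((Equiv.swap j j').trans σ) j' = σ j := by simp
  rw [h1, h2]
  omega

section SigmaStar

variable (B k n : ℕ)

/-- The row matched to column `j` by the minimizing permutation:
same block `j/k`, reversed position `k-1-j%k` within the block. -/
def rowOf (hk : 0 < k) (j : Fin (B * k)) : Fin (B * k) :=
  ⟨k * (j.val / k) + (k - 1 - j.val % k), by
    have hq : j.val / k < B := Nat.div_lt_of_lt_mul (by simpa [mul_comm] using j.isLt)
    calc k * (j.val / k) + (k - 1 - j.val % k) < k * (j.val / k) + k := by omega
      _ = k * (j.val / k + 1) := (Nat.mul_succ _ _).symm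
      _ ≤ k * B := Nat.mul_le_mul_left k hq
      _ = B * k := mul_comm _ _⟩

lemma rowOf_val (hk : 0 < k) (j : Fin (B * k)) :
    (rowOf B k hk j).val = k * (j.val / k) + (k - 1 - j.val % k) := rfl

lemma rowOf_div (hk : 0 < k) (j : Fin (B * k)) :
    (rowOf B k hk j).val / k = j.val / k := by
  rw [rowOf_val, Nat.mul_add_div hk, Nat.div_eq_of_lt (by omega : k - 1 - j.val % k < k)]
  omega

lemma rowOf_mod (hk : 0 < k) (j : Fin (B * k)) :
    (rowOf B k hk j).val % k = k - 1 - j.val % k := by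
  rw [rowOf_val, Nat.mul_add_mod, Nat.mod_eq_of_lt (by omega : k - 1 - j.val % k < k)]

lemma rowOf_involutive (hk : 0 < k) : Function.Involutive (rowOf B k hk) := by
  intro j
  apply Fin.ext
  rw [rowOf_val, rowOf_div, rowOf_mod]
  have h1 := Nat.div_add_mod j.val k
  have h2 := Nat.mod_lt j.val hk
  omega

/-- The unique admissible permutation of minimal weight. -/
def sigmaStar (hk : 0 < k) : Equiv.Perm (Fin (B * k)) :=
  Function.Involutive.toPerm _ (rowOf_involutive B k hk)

lemma sigmaStar_apply (hk : 0 < k) (j : Fin (B * k)) :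
    sigmaStar B k hk j = rowOf B k hk j := rfl

/-- Row weight exponent. -/
def xval (r : Fin (B * k)) : ℕ := (B - 1 - r.val / k) * n + r.val % k

lemma xval_sigmaStar (hk : 0 < k) (j : Fin (B * k)) :
    xval B k n (sigmaStar B k hk j) = (B - 1 - j.val / k) * n + (k - 1 - j.val % k) := by
  rw [xval, sigmaStar_apply, rowOf_div, rowOf_mod]

lemma xval_sigmaStar_anti (hk : 0 < k) (hkn : k < n) {j j' : Fin (B * k)} (h : j < j') :
    xval B k n (sigmaStar B k hk j') < xval B k n (sigmaStar B k hk j) := by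
  rw [xval_sigmaStar, xval_sigmaStar]
  have hjj' : j.val < j'.val := h
  have hq : j.val / k ≤ j'.val / k := Nat.div_le_div_right hjj'.le
  have hqB : j'.val / k < B := Nat.div_lt_of_lt_mul (by simpa [mul_comm] using j'.isLt)
  have hm1 : j.val % k < k := Nat.mod_lt _ hk
  have hm2 : j'.val % k < k := Nat.mod_lt _ hk
  rcases eq_or_lt_of_le hq with heq | hlt
  · have h1 := Nat.div_add_mod j.val k
    have h2 := Nat.div_add_mod j'.val k
    rw [← heq] at h2
    rw [heq]
    omega
  · have h5 : (B - 1 - j'.val / k) * n + n = (B - 1 - j'.val / k + 1) * n := by ring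
    have h6 : (B - 1 - j'.val / k + 1) * n ≤ (B - 1 - j.val / k) * n :=
      Nat.mul_le_mul_right n (by omega)
    omega

/-- The core combinatorial fact: among admissible permutations, `sigmaStar` is the
unique minimizer of the weight `∑ j, 2 ^ (C j + xval (σ j))`. -/
lemma core (μ : ℕ) (hk : 0 < k) (hkn : k < n) (C : Fin (B * k) → ℕ) (hC : StrictMono C)
    (hA : ∀ j : Fin (B * k), C j / n ≤ j.val / k)
    (hB : ∀ j : Fin (B * k), j.val / k ≤ μ + C j / n)
    (σ : Equiv.Perm (Fin (B * k)))
    (hadm : ∀ j, C j / n ≤ (σ j).val / k ∧ (σ j).val / k ≤ μ + C j / n)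
    (hne : σ ≠ sigmaStar B k hk) :
    ∑ j, 2 ^ (C j + xval B k n (sigmaStar B k hk j)) < ∑ j, 2 ^ (C j + xval B k n (σ j)) := by
  set ss := sigmaStar B k hk with hss
  set W : Equiv.Perm (Fin (B * k)) → ℕ := fun τ => ∑ j, 2 ^ (C j + xval B k n (τ j)) with hW
  show W ss < W σ
  have hssadm : ∀ j, C j / n ≤ (ss j).val / k ∧ (ss j).val / k ≤ μ + C j / n := by
    intro j
    rw [hss, sigmaStar_apply, rowOf_div]
    exact ⟨hA j, hB j⟩
  set A : Finset (Equiv.Perm (Fin (B * k))) :=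
    Finset.univ.filter
      (fun τ => ∀ j, C j / n ≤ (τ j).val / k ∧ (τ j).val / k ≤ μ + C j / n) with hA'
  have hmem : ∀ τ, τ ∈ A ↔
      (∀ j, C j / n ≤ (τ j).val / k ∧ (τ j).val / k ≤ μ + C j / n) := by
    intro τ; simp [hA']
  obtain ⟨σ₀, hσ₀, hmin⟩ := Finset.exists_min_image A W ⟨ss, (hmem ss).2 hssadm⟩
  have key : ∀ τ ∈ A, (∀ ρ ∈ A, W τ ≤ W ρ) → τ = ss := by
    intro τ hτ hτmin
    have hτadm := (hmem τ).1 hτ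
    have stab : ∀ j j' : Fin (B * k), j < j' →
        (C j / n ≤ (τ j').val / k ∧ (τ j').val / k ≤ μ + C j / n) →
        (C j' / n ≤ (τ j).val / k ∧ (τ j).val / k ≤ μ + C j' / n) →
        ¬ xval B k n (τ j) < xval B k n (τ j') := by
      intro j j' hjj hadm1 hadm2 hx
      set τ' := (Equiv.swap j j').trans τ with hτ'
      have hτ'A : τ' ∈ A := by
        rw [hmem]
        intro l
        by_cases h1 : l = j
        · subst h1; simpa [hτ', Equiv.swap_apply_left] using hadm1
        by_cases h2 : l = j'
        · subst h2; simpa [hτ', Equiv.swap_apply_right] using hadm2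
        · simpa [hτ', Equiv.swap_apply_of_ne_of_ne h1 h2] using hτadm l
      have hlt : W τ' < W τ := by
        apply sum_swap_lt (fun r l => 2 ^ (C l + xval B k n r)) τ j j' (ne_of_lt hjj)
        exact pow_supermodular (hC hjj) hx
      exact absurd (hτmin τ' hτ'A) (not_le.2 hlt)
    by_contra hneq
    have hDne : (Finset.univ.filter (fun j => τ j ≠ ss j)).Nonempty := by
      by_contra hD
      rw [Finset.not_nonempty_iff_eq_empty, Finset.filter_eq_empty_iff] at hD
      exact hneq (Equiv.ext fun j => not_not.1 (hD (Finset.mem_univ j)))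
    set J := Finset.max' _ hDne with hJdef
    have hJmem := Finset.max'_mem _ hDne
    have hJne : τ J ≠ ss J := (Finset.mem_filter.1 hJmem).2
    have habove : ∀ j', J < j' → τ j' = ss j' := by
      intro j' hj'
      by_contra hcon
      exact absurd (Finset.le_max' _ j'
        (Finset.mem_filter.2 ⟨Finset.mem_univ _, hcon⟩)) (not_le.2 hj')
    set r := τ J with hr
    set j₁ := ss r with hj₁def
    have hssr : ss j₁ = r := by
      rw [hj₁def, hss, sigmaStar_apply, sigmaStar_apply]
      exact rowOf_involutive B k hk r
    have hj₁J : j₁ < J := by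
      rcases lt_trichotomy j₁ J with h | h | h
      · exact h
      · exact (hJne (by rw [show r = ss j₁ from hssr.symm, h])).elim
      · exfalso
        have h1 : τ j₁ = τ J := by rw [habove j₁ h, hssr, hr]
        exact absurd (τ.injective h1) (ne_of_gt h)
    have hxr : xval B k n (ss J) < xval B k n r := by
      rw [← hssr]
      exact xval_sigmaStar_anti B k n hk hkn hj₁J
    set j₀ := τ.symm (ss J) with hj₀def
    have hτj₀ : τ j₀ = ss J := Equiv.apply_symm_apply τ _
    have hj₀J : j₀ < J := by
      rcases lt_trichotomy j₀ J with h | h | h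
      · exact h
      · exact absurd (by rw [← h, hτj₀, h] : τ J = ss J) hJne
      · exfalso
        have h1 : ss j₀ = ss J := by rw [← habove j₀ h, hτj₀]
        exact absurd (ss.injective h1) (ne_of_gt h)
    have hτJ : τ J = ss j₁ := hssr.symm
    have hdiv_r : (τ J).val / k = j₁.val / k := by
      rw [hτJ, hss, sigmaStar_apply, rowOf_div]
    have hβr1 : C j₀ / n ≤ (τ J).val / k := by
      have h1 : C j₀ ≤ C J := hC.monotone hj₀J.le
      exact le_trans (Nat.div_le_div_right h1) (hτadm J).1
    have hβr2 : (τ J).val / k ≤ μ + C j₀ / n := by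
      have e2 : j₁.val ≤ J.val := le_of_lt hj₁J
      have e3 := (hτadm j₀).2
      rw [hτj₀, hss, sigmaStar_apply, rowOf_div] at e3
      have e4 : j₁.val / k ≤ J.val / k := Nat.div_le_div_right e2
      omega
    have := stab j₀ J hj₀J ⟨hβr1, hβr2⟩ (by rw [hτj₀]; exact hssadm J)
    apply this
    rw [hτj₀, ← hr]
    exact hxr
  have hσ₀eq : σ₀ = ss := key σ₀ hσ₀ hmin
  have hle : W ss ≤ W σ := by
    rw [← hσ₀eq]
    exact hmin σ ((hmem σ).2 hadm)
  rcases lt_or_eq_of_le hle with h | h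
  · exact h
  · exfalso
    apply hne
    apply key σ ((hmem σ).2 hadm)
    intro ρ hρ
    rw [← h]
    rw [← hσ₀eq] at *
    exact hmin ρ hρ

end SigmaStar

end CompleteMDPAux

namespace CompleteMDPAux

/-- If `α` has order `p^N - 1` in `F` with `#F = p^N`, then no integer polynomial whose
reduction mod `p` is nonzero and has degree `< N` can vanish at `α`. -/
lemma aeval_ne_zero_int (F : Type*) [Field F] [Fintype F] {p N : ℕ} (hp : p.Prime)
    (hcard : Fintype.card F = p ^ N) (hN : 0 < N) (α : F) (hα : orderOf α = p ^ N - 1)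
    (P : Polynomial ℤ) (c : ℕ) (hc : ¬ ((p : ℤ) ∣ P.coeff c)) (hdeg : P.natDegree < N) :
    (Polynomial.aeval α) P ≠ 0 := by
  intro h0
  haveI : Fact p.Prime := ⟨hp⟩
  have hpow1 : 1 < p ^ N := Nat.one_lt_pow (by omega : N ≠ 0) hp.one_lt
  have hα0 : α ≠ 0 := by
    intro h
    have h1 : α ^ orderOf α = 1 := pow_orderOf_eq_one α
    rw [hα, h, zero_pow (by omega : p ^ N - 1 ≠ 0)] at h1
    exact zero_ne_one h1
  -- characteristic of F is p
  haveI := ringChar.charP F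
  obtain ⟨d, hq, hcard2⟩ := FiniteField.card F (ringChar F)
  have hpchar : p = ringChar F := by
    have h1 : p ∣ ringChar F ^ (d : ℕ) := by
      rw [← hcard2, hcard]
      exact dvd_pow_self p (by omega : N ≠ 0)
    exact (Nat.prime_dvd_prime_iff_eq hp hq).1 (hp.dvd_of_dvd_pow h1)
  haveI : CharP F p := hpchar ▸ ringChar.charP F
  letI : Algebra (ZMod p) F := ZMod.algebra F p
  letI : IsScalarTower ℤ (ZMod p) F :=
    IsScalarTower.of_algebraMap_eq' (Subsingleton.elim _ _)
  -- finrank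
  have hfr : Module.finrank (ZMod p) F = N := by
    have hcc := Module.card_eq_pow_finrank (K := ZMod p) (V := F)
    rw [ZMod.card, hcard] at hcc
    exact Nat.pow_right_injective hp.two_le hcc.symm
  have hint : IsIntegral (ZMod p) α := IsIntegral.of_finite _ _
  -- α generates F
  have htop : IntermediateField.adjoin (ZMod p) {α} = ⊤ := by
    rw [eq_top_iff]
    intro x _
    by_cases hx : x = 0
    · rw [hx]; exact zero_mem _
    · have hu : orderOf (Units.mk0 α hα0) = p ^ N - 1 := by
        rw [← orderOf_units]
        simpa using hα
      have hcardu : Nat.card Fˣ = p ^ N - 1 := by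
        rw [Nat.card_eq_fintype_card, Fintype.card_units, hcard]
      have hzp : Subgroup.zpowers (Units.mk0 α hα0) = ⊤ := by
        apply Subgroup.eq_top_of_card_eq
        rw [Nat.card_zpowers, hu, hcardu]
      have hmem' : Units.mk0 x hx ∈ Subgroup.zpowers (Units.mk0 α hα0) := by
        rw [hzp]; trivial
      obtain ⟨i, hi⟩ := Submonoid.mem_powers_iff _ _ |>.1
        (mem_powers_iff_mem_zpowers.2 hmem')
      have hαi : α ^ i = x := by
        have := congrArg Units.val hi
        simpa using this
      rw [← hαi]
      exact pow_mem (IntermediateField.mem_adjoin_simple_self (ZMod p) α) i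
  have hdegmin : (minpoly (ZMod p) α).natDegree = N := by
    have h1 := IntermediateField.adjoin.finrank hint
    rw [htop, IntermediateField.finrank_top'] at h1
    rw [← h1, hfr]
  -- reduce P mod p
  set Q : Polynomial (ZMod p) := P.map (Int.castRingHom (ZMod p)) with hQ
  have hQne : Q ≠ 0 := by
    intro h
    apply hc
    have : Q.coeff c = 0 := by rw [h]; simp
    rw [hQ, Polynomial.coeff_map] at this
    exact (ZMod.intCast_zmod_eq_zero_iff_dvd _ _).1 this
  have hQ0 : Polynomial.aeval α Q = 0 := by
    rw [hQ, show (Int.castRingHom (ZMod p)) = algebraMap ℤ (ZMod p) from rfl,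
      Polynomial.aeval_map_algebraMap]
    exact h0
  have hdvd := minpoly.dvd (ZMod p) α hQ0
  have h2 := Polynomial.natDegree_le_of_dvd hdvd hQne
  have h3 : Q.natDegree ≤ P.natDegree := Polynomial.natDegree_map_le
  omega

end CompleteMDPAux

namespace CompleteMDPAux

lemma expo_identity (μ n L2 cb β rm cmod Cv : ℕ) (h1 : β ≤ μ + cb) (h2 : β ≤ L2)
    (h3 : n * cb + cmod = Cv) :
    ((μ + cb - β) * n + rm + cmod) + L2 * n = μ * n + (Cv + ((L2 - β) * n + rm)) := by
  have h : (μ + cb - β) + L2 = μ + cb + (L2 - β) := by omega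
  calc ((μ + cb - β) * n + rm + cmod) + L2 * n
      = ((μ + cb - β) + L2) * n + rm + cmod := by ring
    _ = (μ + cb + (L2 - β)) * n + rm + cmod := by rw [h]
    _ = μ * n + ((n * cb + cmod) + ((L2 - β) * n + rm)) := by ring
    _ = μ * n + (Cv + ((L2 - β) * n + rm)) := by rw [h3]

lemma expo_bound {μ n k cb β rm cmod : ℕ} (h1 : cb ≤ β) (h2 : rm ≤ k - 1)
    (h3 : cmod ≤ n - 1) (hk : 1 ≤ k) (hn : 1 ≤ n) :
    (μ + cb - β) * n + rm + cmod ≤ (μ + 1) * n + k - 2 := by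
  have h4 : μ + cb - β ≤ μ := by omega
  have h5 : (μ + cb - β) * n ≤ μ * n := Nat.mul_le_mul_right n h4
  have h6 : (μ + 1) * n = μ * n + n := by ring
  omega

end CompleteMDPAux



/-- Construction of a complete MDP convolutional code: over `F = F_{p^N}` with a
primitive element `α` and `N > k(L+1+2μ)·2^{(μ+1)n+k-2}`, the coefficient matrices
`(G_i)_{r,c} = α^{2^{in + (r-1) + (c-1)}}` yield a matrix `𝒢_{μ+L}^c` all of whose
non-trivial full-size minors are nonzero, i.e. `G(z) = Σ G_i z^i` generates an
`(n,k,δ)` complete MDP convolutional code. -/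
theorem completeMDP_construction {F : Type*} [Field F] [Fintype F]
    {p N k n δ μ L : ℕ} (hp : p.Prime) (hcard : Fintype.card F = p ^ N)
    (α : F) (hα : orderOf α = p ^ N - 1)
    (hk : 0 < k) (hn : 0 < n) (hkn : k < n) (hkδ : k ∣ δ)
    (hμ : μ = δ / k) (hL : L = δ / k + δ / (n - k))
    (hN : k * (L + 1 + 2 * μ) * 2 ^ ((μ + 1) * n + k - 2) < N) :
    ∀ (ℓ : Fin ((L + 1 + 2 * μ) * k) → Fin ((L + 1 + μ) * n)), StrictMono ℓ →
      (∀ s : ℕ, 1 ≤ s → s ≤ L + μ →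
        ∀ (a b : Fin ((L + 1 + 2 * μ) * k)),
          a.val + 1 = s * k → b.val = (μ + s) * k →
            (ℓ a).val < s * n ∧ s * n ≤ (ℓ b).val) →
      ((bigG k n hk hn μ L
          (fun i => Matrix.of fun (r : Fin k) (c : Fin n) =>
            α ^ (2 ^ (i * n + r.val + c.val)))).submatrix id ℓ).det ≠ 0 := by
  intro ℓ hmono hnt
  set C : Fin ((L + 1 + 2 * μ) * k) → ℕ := fun j => (ℓ j).val with hCdef
  have hC : StrictMono C := fun a b h => hmono h
  -- condition (A): column block index is at most row block index of the diagonal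
  have hA : ∀ j : Fin ((L + 1 + 2 * μ) * k), C j / n ≤ j.val / k := by
    intro j
    obtain ⟨q, hq⟩ : ∃ q, j.val / k = q := ⟨_, rfl⟩
    obtain ⟨cb, hcb⟩ : ∃ cb, C j / n = cb := ⟨_, rfl⟩
    rw [hq, hcb]
    by_cases hcase : L + μ ≤ q
    · have h1 : C j < n * (L + 1 + μ) := by
        calc C j < (L + 1 + μ) * n := (ℓ j).isLt
          _ = n * (L + 1 + μ) := mul_comm _ _
      have h2 : C j / n < L + 1 + μ := Nat.div_lt_of_lt_mul h1
      rw [hcb] at h2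
      omega
    · push_neg at hcase
      have hpos : 0 < (q + 1) * k := Nat.mul_pos (by omega) hk
      have h0 : (q + 1) * k ≤ (L + 1 + 2 * μ) * k :=
        Nat.mul_le_mul_right k (by omega : q + 1 ≤ L + 1 + 2 * μ)
      have hab : (q + 1) * k - 1 < (L + 1 + 2 * μ) * k := by omega
      have hbb : (μ + (q + 1)) * k < (L + 1 + 2 * μ) * k :=
        (Nat.mul_lt_mul_right hk).2 (by omega : μ + (q + 1) < L + 1 + 2 * μ)
      obtain ⟨h1, -⟩ := hnt (q + 1) (by omega) (by omega)
        ⟨(q + 1) * k - 1, hab⟩ ⟨(μ + (q + 1)) * k, hbb⟩ (by simp; omega) rfl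
      have hj : j.val ≤ (q + 1) * k - 1 := by
        have h5 := CompleteMDPAux.lt_succ_div_mul j.val k hk
        rw [hq] at h5
        omega
      have h2 : C j ≤ C ⟨(q + 1) * k - 1, hab⟩ :=
        hC.monotone (show j ≤ _ from hj)
      have h3 : C j < n * (q + 1) := by
        calc C j < (q + 1) * n := lt_of_le_of_lt h2 h1
          _ = n * (q + 1) := mul_comm _ _
      have h4 : C j / n < q + 1 := Nat.div_lt_of_lt_mul h3
      rw [hcb] at h4
      omega
  -- condition (B)
  have hBc : ∀ j : Fin ((L + 1 + 2 * μ) * k), j.val / k ≤ μ + C j / n := by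
    intro j
    obtain ⟨q, hq⟩ : ∃ q, j.val / k = q := ⟨_, rfl⟩
    obtain ⟨cb, hcb⟩ : ∃ cb, C j / n = cb := ⟨_, rfl⟩
    rw [hq, hcb]
    by_cases hcase : q ≤ μ
    · omega
    · push_neg at hcase
      have hqB : j.val / k < L + 1 + 2 * μ := Nat.div_lt_of_lt_mul (by
        calc j.val < (L + 1 + 2 * μ) * k := j.isLt
          _ = k * (L + 1 + 2 * μ) := mul_comm _ _)
      rw [hq] at hqB
      have hpos : 0 < (q - μ) * k := Nat.mul_pos (by omega) hk
      have h0 : (q - μ) * k ≤ (L + 1 + 2 * μ) * k :=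
        Nat.mul_le_mul_right k (by omega : q - μ ≤ L + 1 + 2 * μ)
      have hab : (q - μ) * k - 1 < (L + 1 + 2 * μ) * k := by omega
      have hbb : (μ + (q - μ)) * k < (L + 1 + 2 * μ) * k :=
        (Nat.mul_lt_mul_right hk).2 (by omega : μ + (q - μ) < L + 1 + 2 * μ)
      obtain ⟨-, h2⟩ := hnt (q - μ) (by omega) (by omega)
        ⟨(q - μ) * k - 1, hab⟩ ⟨(μ + (q - μ)) * k, hbb⟩ (by simp; omega) rfl
      have hbj : (μ + (q - μ)) * k ≤ j.val := by
        have h3 : (μ + (q - μ)) = q := by omega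
        rw [h3, ← hq]
        exact Nat.div_mul_le_self j.val k
      have h4 : C ⟨(μ + (q - μ)) * k, hbb⟩ ≤ C j :=
        hC.monotone (show _ ≤ j from hbj)
      have h5 : (q - μ) * n ≤ C j := le_trans h2 h4
      have h6 : q - μ ≤ C j / n := (Nat.le_div_iff_mul_le hn).2 h5
      rw [hcb] at h6
      omega
  -- the matrix and its entries
  set M : Matrix (Fin ((L + 1 + 2 * μ) * k)) (Fin ((L + 1 + 2 * μ) * k)) F :=
    (bigG k n hk hn μ L
      (fun i => Matrix.of fun (r : Fin k) (c : Fin n) =>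
        α ^ (2 ^ (i * n + r.val + c.val)))).submatrix id ℓ with hM
  show M.det ≠ 0
  have hentry : ∀ r j, M r j =
      if C j / n ≤ r.val / k ∧ r.val / k ≤ μ + C j / n then
        α ^ (2 ^ ((μ + C j / n - r.val / k) * n + r.val % k + C j % n)) else 0 := by
    intro r j
    rfl
  set expo : Fin ((L + 1 + 2 * μ) * k) → Fin ((L + 1 + 2 * μ) * k) → ℕ :=
    fun r j => (μ + C j / n - r.val / k) * n + r.val % k + C j % n with hexpo
  set w : Equiv.Perm (Fin ((L + 1 + 2 * μ) * k)) → ℕ :=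
    fun σ => ∑ j, 2 ^ expo (σ j) j with hw
  set A : Finset (Equiv.Perm (Fin ((L + 1 + 2 * μ) * k))) :=
    Finset.univ.filter
      (fun σ => ∀ j, C j / n ≤ (σ j).val / k ∧ (σ j).val / k ≤ μ + C j / n) with hAdef
  have hmemA : ∀ σ, σ ∈ A ↔
      (∀ j, C j / n ≤ (σ j).val / k ∧ (σ j).val / k ≤ μ + C j / n) := by
    intro σ; simp [hAdef]
  -- determinant as a sum over admissible permutations
  have hdet : M.det = ∑ σ ∈ A, Equiv.Perm.sign σ • α ^ (w σ) := by
    rw [Matrix.det_apply]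
    have hsplit : ∑ σ ∈ A, Equiv.Perm.sign σ • ∏ i, M (σ i) i
        = ∑ σ : Equiv.Perm (Fin ((L + 1 + 2 * μ) * k)),
            Equiv.Perm.sign σ • ∏ i, M (σ i) i := by
      rw [hAdef]
      apply Finset.sum_filter_of_ne
      intro σ _ hne
      by_contra hadm
      push_neg at hadm
      obtain ⟨j, hj⟩ := hadm
      apply hne
      have hzero : M (σ j) j = 0 := by
        rw [hentry (σ j) j, if_neg]
        intro hco
        have := hj hco.1
        omega
      rw [show (∏ i, M (σ i) i) = 0 from Finset.prod_eq_zero (Finset.mem_univ j) hzero,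
        smul_zero]
    rw [← hsplit]
    apply Finset.sum_congr rfl
    intro σ hσ
    have hadm := (hmemA σ).1 hσ
    congr 1
    calc ∏ i, M (σ i) i = ∏ i, α ^ (2 ^ expo (σ i) i) := by
          apply Finset.prod_congr rfl
          intro i _
          rw [hentry (σ i) i, if_pos (hadm i)]
      _ = α ^ w σ := Finset.prod_pow_eq_pow_sum _ _ _
  -- the minimizing permutation
  set ss := CompleteMDPAux.sigmaStar (L + 1 + 2 * μ) k hk with hssdef
  have hssadm : ∀ j, C j / n ≤ (ss j).val / k ∧ (ss j).val / k ≤ μ + C j / n := by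
    intro j
    rw [hssdef, CompleteMDPAux.sigmaStar_apply, CompleteMDPAux.rowOf_div]
    exact ⟨hA j, hBc j⟩
  have hssA : ss ∈ A := (hmemA ss).2 hssadm
  -- transfer of the core inequality from `xval`-weights to `expo`-weights
  have htrans : ∀ τ : Equiv.Perm (Fin ((L + 1 + 2 * μ) * k)),
      (∀ j, C j / n ≤ (τ j).val / k ∧ (τ j).val / k ≤ μ + C j / n) →
      w τ * 2 ^ ((L + 2 * μ) * n)
        = 2 ^ (μ * n) * ∑ j, 2 ^ (C j + CompleteMDPAux.xval (L + 1 + 2 * μ) k n (τ j)) := by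
    intro τ hτ
    rw [hw, Finset.sum_mul, Finset.mul_sum]
    apply Finset.sum_congr rfl
    intro j _
    rw [← pow_add, ← pow_add]
    congr 1
    have hβ : (τ j).val / k ≤ L + 2 * μ := by
      have h1 : (τ j).val / k < L + 1 + 2 * μ := Nat.div_lt_of_lt_mul (by
        calc (τ j).val < (L + 1 + 2 * μ) * k := (τ j).isLt
          _ = k * (L + 1 + 2 * μ) := mul_comm _ _)
      omega
    have hx : CompleteMDPAux.xval (L + 1 + 2 * μ) k n (τ j)
        = (L + 2 * μ - (τ j).val / k) * n + (τ j).val % k := by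
      rw [CompleteMDPAux.xval]
      congr 2
      omega
    rw [hx, hexpo]
    exact CompleteMDPAux.expo_identity μ n (L + 2 * μ) (C j / n) ((τ j).val / k)
      ((τ j).val % k) (C j % n) (C j) (hτ j).2 hβ (Nat.div_add_mod (C j) n)
  -- uniqueness of the minimal exponent
  have huniq : ∀ σ ∈ A, σ ≠ ss → w ss < w σ := by
    intro σ hσ hne
    have hadm := (hmemA σ).1 hσ
    have hcore := CompleteMDPAux.core (L + 1 + 2 * μ) k n μ hk hkn C hC hA hBc σ hadm
      (by rw [hssdef] at hne; exact hne)
    have h1 := htrans σ hadm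
    have h2 := htrans ss hssadm
    have h3 : w ss * 2 ^ ((L + 2 * μ) * n) < w σ * 2 ^ ((L + 2 * μ) * n) := by
      rw [h1, h2]
      exact mul_lt_mul_of_pos_left hcore (by positivity)
    exact lt_of_mul_lt_mul_right h3 (Nat.zero_le _)
  -- the determinant is a nonzero polynomial expression in α
  intro hdet0
  set P : Polynomial ℤ :=
    ∑ σ ∈ A, Polynomial.C ((Equiv.Perm.sign σ : ℤˣ) : ℤ) * Polynomial.X ^ (w σ) with hP
  have hcoeff : P.coeff (w ss) = ((Equiv.Perm.sign ss : ℤˣ) : ℤ) := by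
    rw [hP, Polynomial.finset_sum_coeff]
    rw [Finset.sum_eq_single ss]
    · simp [Polynomial.coeff_C_mul, Polynomial.coeff_X_pow]
    · intro σ hσ hne
      rw [Polynomial.coeff_C_mul, Polynomial.coeff_X_pow,
        if_neg (ne_of_lt (huniq σ hσ hne)), mul_zero]
    · intro hss
      exact absurd hssA hss
  have hcsgn : ¬ ((p : ℤ) ∣ P.coeff (w ss)) := by
    rw [hcoeff]
    have hp1 : ¬ ((p : ℤ) ∣ 1) := by
      intro hd
      have h1 := Int.le_of_dvd one_pos hd
      have h2 : (2 : ℤ) ≤ (p : ℤ) := by exact_mod_cast hp.two_le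
      omega
    rcases Int.units_eq_one_or (Equiv.Perm.sign ss) with h | h <;> rw [h]
    · simpa using hp1
    · simp only [Units.val_neg, Units.val_one, dvd_neg]
      exact hp1
  have hPdeg : P.natDegree < N := by
    have hwbound : ∀ σ ∈ A, w σ ≤ k * (L + 1 + 2 * μ) * 2 ^ ((μ + 1) * n + k - 2) := by
      intro σ hσ
      have hadm := (hmemA σ).1 hσ
      calc w σ ≤ ∑ _j : Fin ((L + 1 + 2 * μ) * k), 2 ^ ((μ + 1) * n + k - 2) := by
            rw [hw]
            apply Finset.sum_le_sum
            intro j _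
            apply Nat.pow_le_pow_right (by norm_num)
            rw [hexpo]
            exact CompleteMDPAux.expo_bound (hadm j).1
              (by have := Nat.mod_lt (σ j).val hk; omega)
              (by have := Nat.mod_lt (C j) hn; omega) hk hn
        _ = (L + 1 + 2 * μ) * k * 2 ^ ((μ + 1) * n + k - 2) := by
            rw [Finset.sum_const, Finset.card_univ, Fintype.card_fin, smul_eq_mul]
        _ = k * (L + 1 + 2 * μ) * 2 ^ ((μ + 1) * n + k - 2) := by ring
    apply lt_of_le_of_lt _ hN
    rw [hP]
    apply Polynomial.natDegree_sum_le_of_forall_le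
    intro σ hσ
    exact le_trans (Polynomial.natDegree_C_mul_X_pow_le _ _) (hwbound σ hσ)
  have haev : Polynomial.aeval α P = M.det := by
    rw [hP, map_sum, hdet]
    apply Finset.sum_congr rfl
    intro σ _
    rw [_root_.map_mul, _root_.map_pow, Polynomial.aeval_C, Polynomial.aeval_X]
    rw [Units.smul_def, zsmul_eq_mul]
    simp
  exact CompleteMDPAux.aeval_ne_zero_int F hp hcard (by omega : 0 < N) α hα P (w ss)
    hcsgn hPdeg (by rw [haev]; exact hdet0)
end
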